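/- arXiv:1912.04725 — 2 statements merged into one kernel-verified Lean document; each statement's English description precedes it below -/
import Mathlib

section
/- If A ⊆ C^{2,3} is admissible and ≺, ≺' are two compatible orders on A ∩ T, then the products of the elements of A ∩ T taken in the order ≺ and in the order ≺' are equal. (Hence the permutation π(A) defined as this product is well-defined.) -/
namespace SmoothPerm

variable {n : ℕ}

/-- Bruhat order on `S_n`, via the standard counting criterion. -/
def bruhatLE (τ σ : Equiv.Perm (Fin n)) : Prop :=
  ∀ i j : Fin n,
    (Finset.univ.filter (fun x => x ≤ i ∧ σ x ≤ j)).card ≤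
      (Finset.univ.filter (fun x => x ≤ i ∧ τ x ≤ j)).card

/-- Number of inversions (the length ℓ(σ)). -/
def invNum (σ : Equiv.Perm (Fin n)) : ℕ :=
  (Finset.univ.filter (fun p : Fin n × Fin n => p.1 < p.2 ∧ σ p.2 < σ p.1)).card

def isTransposition (τ : Equiv.Perm (Fin n)) : Prop :=
  ∃ i j : Fin n, i < j ∧ τ = Equiv.swap i j

/-- σ is smooth iff ℓ(σ) equals the number of transpositions Bruhat-below σ. -/
def smooth (σ : Equiv.Perm (Fin n)) : Prop :=
  invNum σ = Nat.card {τ : Equiv.Perm (Fin n) // isTransposition τ ∧ bruhatLE τ σ}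

def avoids4231 (σ : Equiv.Perm (Fin n)) : Prop :=
  ¬ ∃ a b c d : Fin n, a < b ∧ b < c ∧ c < d ∧ σ d < σ b ∧ σ b < σ c ∧ σ c < σ a

/-- covexillary = 3412-avoiding. -/
def covexillary (σ : Equiv.Perm (Fin n)) : Prop :=
  ¬ ∃ a b c d : Fin n, a < b ∧ b < c ∧ c < d ∧ σ c < σ d ∧ σ d < σ a ∧ σ a < σ b

def avoids321 (σ : Equiv.Perm (Fin n)) : Prop :=
  ¬ ∃ a b c : Fin n, a < b ∧ b < c ∧ σ c < σ b ∧ σ b < σ a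

/-- The 3-cycle i ↦ j ↦ k ↦ i. -/
def Rc (i j k : Fin n) : Equiv.Perm (Fin n) := Equiv.swap i k * Equiv.swap i j

def Lc (i j k : Fin n) : Equiv.Perm (Fin n) := (Rc i j k)⁻¹

def inC23 (τ : Equiv.Perm (Fin n)) : Prop :=
  isTransposition τ ∨ ∃ i j k : Fin n, i < j ∧ j < k ∧ (τ = Rc i j k ∨ τ = Lc i j k)

/-- The 2-3-table of σ. -/
def Ctab (σ : Equiv.Perm (Fin n)) : Set (Equiv.Perm (Fin n)) :=
  {τ | inC23 τ ∧ bruhatLE τ σ}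

def admissible (A : Set (Equiv.Perm (Fin n))) : Prop :=
  (∀ τ ∈ A, inC23 τ) ∧
  (∀ σ ∈ A, ∀ τ : Equiv.Perm (Fin n), inC23 τ → bruhatLE τ σ → τ ∈ A) ∧
  (∀ i j k l : Fin n, i < j → j < l → i < k → k < l →
    Rc i j l ∈ A → Lc i k l ∈ A → Equiv.swap i l ∈ A) ∧
  (∀ i j k : Fin n, i < j → j < k →
    Equiv.swap i j ∈ A → Equiv.swap j k ∈ A → (Rc i j k ∈ A ∨ Lc i j k ∈ A))

def isWedge (A : Set (Equiv.Perm (Fin n))) (i j : Fin n) : Prop :=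
  i < j ∧ Equiv.swap i j ∈ A ∧
  (∀ i' : Fin n, (i' : ℕ) + 1 = (i : ℕ) → Equiv.swap i' i ∉ A) ∧
  (∀ j' : Fin n, (j : ℕ) + 1 = (j' : ℕ) → Rc i j j' ∉ A)

def derivedSet (A : Set (Equiv.Perm (Fin n))) (i j : Fin n) : Set (Equiv.Perm (Fin n)) :=
  A \ ({Equiv.swap i j} ∪ {τ | ∃ k, j < k ∧ τ = Lc i j k} ∪
       {τ | ∃ k, i < k ∧ k < j ∧ τ = Rc i k j})

def strictTotalOn (S : Set (Equiv.Perm (Fin n)))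
    (r : Equiv.Perm (Fin n) → Equiv.Perm (Fin n) → Prop) : Prop :=
  (∀ x ∈ S, ¬ r x x) ∧
  (∀ x ∈ S, ∀ y ∈ S, ∀ z ∈ S, r x y → r y z → r x z) ∧
  (∀ x ∈ S, ∀ y ∈ S, x ≠ y → r x y ∨ r y x)

def compatibleOrder (A : Set (Equiv.Perm (Fin n)))
    (r : Equiv.Perm (Fin n) → Equiv.Perm (Fin n) → Prop) : Prop :=
  (∀ i j k : Fin n, i < j → j < k → Rc i j k ∈ A → Lc i j k ∉ A →
    r (Equiv.swap i j) (Equiv.swap j k)) ∧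
  (∀ i j k : Fin n, i < j → j < k → Lc i j k ∈ A → Rc i j k ∉ A →
    r (Equiv.swap j k) (Equiv.swap i j)) ∧
  (∀ i j k : Fin n, i < j → j < k → Equiv.swap i k ∈ A →
    ((r (Equiv.swap i j) (Equiv.swap i k) ∧ r (Equiv.swap i k) (Equiv.swap j k)) ∨
     (r (Equiv.swap j k) (Equiv.swap i k) ∧ r (Equiv.swap i k) (Equiv.swap i j))))

def coversIn (S : Set (Equiv.Perm (Fin n)))
    (r : Equiv.Perm (Fin n) → Equiv.Perm (Fin n) → Prop)
    (x y : Equiv.Perm (Fin n)) : Prop :=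
  x ∈ S ∧ y ∈ S ∧ r x y ∧ ∀ z ∈ S, ¬ (r x z ∧ r z y)

/-- m_σ(i) = max σ([i]). -/
def maxS (σ : Equiv.Perm (Fin n)) (i : Fin n) : Fin n :=
  ((Finset.univ.filter (fun x => x ≤ i)).image (fun x => σ x)).max'
    ⟨σ i, Finset.mem_image_of_mem _ (by simp)⟩

/-- The cyclic shift i → i+1 → ⋯ → j → i. -/
def Rseg (i j : Fin n) : Equiv.Perm (Fin n) :=
  ((List.finRange n).filter (fun x => decide (i ≤ x ∧ x ≤ j))).formPerm

def definedByInclusions (σ : Equiv.Perm (Fin n)) : Prop :=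
  ∀ τ : Equiv.Perm (Fin n),
    (∀ x, maxS τ x ≤ maxS σ x) → (∀ x, maxS τ⁻¹ x ≤ maxS σ⁻¹ x) → bruhatLE τ σ


theorem swap_eq_iff {i j k l : Fin n} (hij : i < j) (hkl : k < l)
    (h : Equiv.swap i j = Equiv.swap k l) : i = k ∧ j = l := by
  by_cases hik : i = k
  · subst hik
    have := congrArg (fun e => e.toFun i) h
    simp [Equiv.swap_apply_left] at this
    exact ⟨rfl, this⟩
  · by_cases hil : i = l
    · subst hil
      have := congrArg (fun e => e.toFun i) h
      simp [Equiv.swap_apply_right] at this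
      subst this
      exact absurd (hkl.trans hij) (lt_irrefl _)
    · have := congrArg (fun e => e.toFun i) h
      simp [Equiv.swap_apply_of_ne_of_ne hik hil] at this
      exact absurd this.symm (ne_of_lt hij)


theorem swap_disjoint_comm {a b c d : Fin n} (h1 : a ≠ c) (h2 : a ≠ d) (h3 : b ≠ c) (h4 : b ≠ d) :
    Equiv.swap a b * Equiv.swap c d = Equiv.swap c d * Equiv.swap a b := by
  have := Equiv.swap_apply_apply (Equiv.swap c d) a b
  rw [Equiv.swap_apply_of_ne_of_ne h1 h2, Equiv.swap_apply_of_ne_of_ne h3 h4] at this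
  conv_lhs => rw [this]
  simp [Equiv.swap_inv, mul_assoc, Equiv.swap_mul_self]

-- braid: sw i j * sw i k * sw j k = sw j k * sw i k * sw i j  (i,j,k distinct)

theorem swap_braid {i j k : Fin n} (hij : i ≠ j) (hik : i ≠ k) (hjk : j ≠ k) :
    Equiv.swap i j * Equiv.swap i k * Equiv.swap j k =
      Equiv.swap j k * Equiv.swap i k * Equiv.swap i j := by
  have h : Equiv.swap j k = Equiv.swap i j * Equiv.swap i k * (Equiv.swap i j)⁻¹ := by
    have := Equiv.swap_apply_apply (Equiv.swap i j) i k
    rw [Equiv.swap_apply_left, Equiv.swap_apply_of_ne_of_ne hik.symm hjk.symm] at this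
    exact this
  rw [h]
  simp [Equiv.swap_inv, mul_assoc, Equiv.swap_mul_self]


theorem Rc_apply_i {i j k : Fin n} (hij : i ≠ j) (hjk : j ≠ k) : Rc i j k i = j := by
  simp [Rc, Equiv.swap_apply_of_ne_of_ne hij.symm hjk]

theorem Rc_apply_j {i j k : Fin n} (hij : i ≠ j) : Rc i j k j = k := by
  simp [Rc, Equiv.swap_apply_of_ne_of_ne]

theorem Rc_apply_k {i j k : Fin n} (hik : i ≠ k) (hjk : j ≠ k) : Rc i j k k = i := by
  simp [Rc, Equiv.swap_apply_of_ne_of_ne hik.symm hjk.symm]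

theorem Rc_apply_ne {i j k x : Fin n} (h1 : x ≠ i) (h2 : x ≠ j) (h3 : x ≠ k) :
    Rc i j k x = x := by
  simp [Rc, Equiv.swap_apply_of_ne_of_ne h1 h2, Equiv.swap_apply_of_ne_of_ne h1 h3]

theorem Lc_apply_i {i j k : Fin n} (hik : i ≠ k) (hjk : j ≠ k) : Lc i j k i = k := by
  have h : Rc i j k k = i := Rc_apply_k hik hjk
  calc Lc i j k i = Lc i j k (Rc i j k k) := by rw [h]
  _ = k := by simp [Lc]

theorem Lc_apply_j {i j k : Fin n} (hij : i ≠ j) (hjk : j ≠ k) : Lc i j k j = i := by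
  have h : Rc i j k i = j := Rc_apply_i hij hjk
  calc Lc i j k j = Lc i j k (Rc i j k i) := by rw [h]
  _ = i := by simp [Lc]

theorem Lc_apply_k {i j k : Fin n} (hij : i ≠ j) : Lc i j k k = j := by
  have h : Rc i j k j = k := Rc_apply_j hij
  calc Lc i j k k = Lc i j k (Rc i j k j) := by rw [h]
  _ = j := by simp [Lc]

theorem Lc_apply_ne {i j k x : Fin n} (h1 : x ≠ i) (h2 : x ≠ j) (h3 : x ≠ k) :
    Lc i j k x = x := by
  have h : Rc i j k x = x := Rc_apply_ne h1 h2 h3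
  conv_lhs => rw [← h]
  simp [Lc]

theorem card_filter_mono_aux (E : Finset (Fin n)) (P Q : Fin n → Prop)
    [DecidablePred P] [DecidablePred Q]
    (h : ∀ x ∉ E, (P x ↔ Q x))
    (h2 : (E.filter P).card ≤ (E.filter Q).card) :
    (Finset.univ.filter P).card ≤ (Finset.univ.filter Q).card := by
  have hu : ∀ (R : Fin n → Prop) [DecidablePred R],
      (Finset.univ.filter R).card = (E.filter R).card + (Eᶜ.filter R).card := by
    intro R _
    rw [← Finset.card_union_of_disjoint]
    · congr 1
      rw [← Finset.filter_union, Finset.union_compl]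
    · exact Finset.disjoint_filter_filter (disjoint_compl_right)
  rw [hu P, hu Q]
  have : Eᶜ.filter P = Eᶜ.filter Q := by
    apply Finset.filter_congr
    intro x hx
    simp only [Finset.mem_compl] at hx
    simp [h x hx]
  rw [this]
  omega



theorem card_filter_triple {a b c : Fin n} (P : Fin n → Prop) [DecidablePred P]
    (hab : a ≠ b) (hac : a ≠ c) (hbc : b ≠ c) :
    (({a, b, c} : Finset (Fin n)).filter P).card
      = (if P a then 1 else 0) + ((if P b then 1 else 0) + (if P c then 1 else 0)) := by
  rw [Finset.card_filter]
  rw [Finset.sum_insert (by simp [hab, hac]), Finset.sum_insert (by simp [hbc]),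
    Finset.sum_singleton]

theorem card_filter_quad {a b c d : Fin n} (P : Fin n → Prop) [DecidablePred P]
    (hab : a ≠ b) (hac : a ≠ c) (had : a ≠ d) (hbc : b ≠ c) (hbd : b ≠ d) (hcd : c ≠ d) :
    (({a, b, c, d} : Finset (Fin n)).filter P).card
      = (if P a then 1 else 0) + ((if P b then 1 else 0) + ((if P c then 1 else 0) + (if P d then 1 else 0))) := by
  rw [Finset.card_filter]
  rw [Finset.sum_insert (by simp [hab, hac, had]), Finset.sum_insert (by simp [hbc, hbd]),
    Finset.sum_insert (by simp [hcd]), Finset.sum_singleton]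

theorem B1 {a b k : Fin n} (hab : a < b) (hbk : b < k) :
    bruhatLE (Equiv.swap a b) (Equiv.swap a k) := by
  intro p q
  have hab' : a ≠ b := ne_of_lt hab
  have hbk' : b ≠ k := ne_of_lt hbk
  have hak' : a ≠ k := ne_of_lt (hab.trans hbk)
  apply card_filter_mono_aux ({a, b, k} : Finset (Fin n))
  · intro x hx
    simp only [Finset.mem_insert, Finset.mem_singleton, not_or] at hx
    rw [Equiv.swap_apply_of_ne_of_ne hx.1 hx.2.2, Equiv.swap_apply_of_ne_of_ne hx.1 hx.2.1]
  · rw [card_filter_triple _ hab' hak' hbk', card_filter_triple _ hab' hak' hbk']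
    simp only [Equiv.swap_apply_left, Equiv.swap_apply_right,
      Equiv.swap_apply_of_ne_of_ne hab'.symm hbk',
      Equiv.swap_apply_of_ne_of_ne hak'.symm hbk'.symm,
      Fin.le_def]
    split_ifs <;> omega

theorem B2 {i a k : Fin n} (hia : i < a) (hak : a < k) :
    bruhatLE (Equiv.swap a k) (Equiv.swap i k) := by
  intro p q
  have hia' : i ≠ a := ne_of_lt hia
  have hak' : a ≠ k := ne_of_lt hak
  have hik' : i ≠ k := ne_of_lt (hia.trans hak)
  apply card_filter_mono_aux ({i, a, k} : Finset (Fin n))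
  · intro x hx
    simp only [Finset.mem_insert, Finset.mem_singleton, not_or] at hx
    rw [Equiv.swap_apply_of_ne_of_ne hx.2.1 hx.2.2, Equiv.swap_apply_of_ne_of_ne hx.1 hx.2.2]
  · rw [card_filter_triple _ hia' hik' hak', card_filter_triple _ hia' hik' hak']
    simp only [Equiv.swap_apply_left, Equiv.swap_apply_right,
      Equiv.swap_apply_of_ne_of_ne hia'.symm hak',
      Equiv.swap_apply_of_ne_of_ne hia' hik',
      Fin.le_def]
    split_ifs <;> omega

theorem bruhatLE_refl (σ : Equiv.Perm (Fin n)) : bruhatLE σ σ := fun _ _ => le_refl _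

theorem bruhatLE_trans {σ τ ρ : Equiv.Perm (Fin n)} (h1 : bruhatLE σ τ) (h2 : bruhatLE τ ρ) :
    bruhatLE σ ρ := fun i j => (h2 i j).trans (h1 i j)

/-- interval inclusion: `i ≤ a < b ≤ k` implies `swap a b ≤ swap i k` in Bruhat order. -/
theorem swap_bruhat_le {i a b k : Fin n} (h1 : i ≤ a) (h2 : a < b) (h3 : b ≤ k) :
    bruhatLE (Equiv.swap a b) (Equiv.swap i k) := by
  have step1 : bruhatLE (Equiv.swap a b) (Equiv.swap a k) := by
    rcases lt_or_eq_of_le h3 with h | h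
    · exact B1 h2 h
    · subst h; exact bruhatLE_refl _
  have step2 : bruhatLE (Equiv.swap a k) (Equiv.swap i k) := by
    rcases lt_or_eq_of_le h1 with h | h
    · exact B2 h (h2.trans_le h3)
    · subst h; exact bruhatLE_refl _
  exact bruhatLE_trans step1 step2



theorem B3 {h i j k : Fin n} (h1 : h < i) (h2 : i < j) (h3 : j < k) :
    bruhatLE (Rc h i j) (Rc h i k) := by
  intro p q
  have hhi : h ≠ i := ne_of_lt h1
  have hij : i ≠ j := ne_of_lt h2
  have hjk : j ≠ k := ne_of_lt h3
  have hhj : h ≠ j := ne_of_lt (h1.trans h2)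
  have hhk : h ≠ k := ne_of_lt ((h1.trans h2).trans h3)
  have hik : i ≠ k := ne_of_lt (h2.trans h3)
  apply card_filter_mono_aux ({h, i, j, k} : Finset (Fin n))
  · intro x hx
    simp only [Finset.mem_insert, Finset.mem_singleton, not_or] at hx
    rw [Rc_apply_ne hx.1 hx.2.1 hx.2.2.2, Rc_apply_ne hx.1 hx.2.1 hx.2.2.1]
  · rw [card_filter_quad _ hhi hhj hhk hij hik hjk, card_filter_quad _ hhi hhj hhk hij hik hjk]
    rw [Rc_apply_i hhi hik, Rc_apply_j hhi, Rc_apply_k hhk hik,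
      Rc_apply_ne hhj.symm hij.symm hjk,
      Rc_apply_i hhi hij, Rc_apply_j hhi, Rc_apply_k hhj hij,
      Rc_apply_ne hhk.symm hik.symm hjk.symm]
    simp only [Fin.le_def]
    split_ifs <;> omega

theorem B4 {i j k q : Fin n} (h1 : i < j) (h2 : j < k) (h3 : k < q) :
    bruhatLE (Lc j k q) (Lc i k q) := by
  intro p b
  have hij : i ≠ j := ne_of_lt h1
  have hjk : j ≠ k := ne_of_lt h2
  have hkq : k ≠ q := ne_of_lt h3
  have hik : i ≠ k := ne_of_lt (h1.trans h2)
  have hiq : i ≠ q := ne_of_lt ((h1.trans h2).trans h3)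
  have hjq : j ≠ q := ne_of_lt (h2.trans h3)
  apply card_filter_mono_aux ({i, j, k, q} : Finset (Fin n))
  · intro x hx
    simp only [Finset.mem_insert, Finset.mem_singleton, not_or] at hx
    rw [Lc_apply_ne hx.2.1 hx.2.2.1 hx.2.2.2, Lc_apply_ne hx.1 hx.2.2.1 hx.2.2.2]
  · rw [card_filter_quad _ hij hik hiq hjk hjq hkq, card_filter_quad _ hij hik hiq hjk hjq hkq]
    rw [Lc_apply_i hiq hkq, Lc_apply_ne hij.symm hjk hjq, Lc_apply_j hik hkq, Lc_apply_k hik,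
      Lc_apply_ne hij hik hiq, Lc_apply_i hjq hkq, Lc_apply_j hjk hkq, Lc_apply_k hjk]
    simp only [Fin.le_def]
    split_ifs <;> omega

/-! ### before/between on lists -/

abbrev Pm (n : ℕ) := Equiv.Perm (Fin n)

def before (l : List (Pm n)) (x y : Pm n) : Prop :=
  x ∈ l ∧ y ∈ l ∧ l.idxOf x < l.idxOf y

def between (l : List (Pm n)) (x m y : Pm n) : Prop :=
  (before l x m ∧ before l m y) ∨ (before l y m ∧ before l m x)

theorem before.mem_left {l : List (Pm n)} {x y : Pm n} (h : before l x y) : x ∈ l := h.1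
theorem before.mem_right {l : List (Pm n)} {x y : Pm n} (h : before l x y) : y ∈ l := h.2.1

theorem before_head {b : Pm n} {t : List (Pm n)} {y : Pm n} (hy : y ∈ t) (hne : y ≠ b) :
    before (b :: t) b y := by
  refine ⟨List.mem_cons_self, List.mem_cons_of_mem _ hy, ?_⟩
  rw [List.idxOf_cons_self, List.idxOf_cons_ne _ (fun h => hne h.symm)]
  exact Nat.succ_pos _

theorem before_cons {b : Pm n} {t : List (Pm n)} {x y : Pm n} (h : before t x y)
    (hx : x ≠ b) (hy : y ≠ b) : before (b :: t) x y := by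
  refine ⟨List.mem_cons_of_mem _ h.1, List.mem_cons_of_mem _ h.2.1, ?_⟩
  rw [List.idxOf_cons_ne _ (fun h' => hx h'.symm), List.idxOf_cons_ne _ (fun h' => hy h'.symm)]
  exact Nat.succ_lt_succ h.2.2

theorem before_cons_elim {b : Pm n} {t : List (Pm n)} {x y : Pm n}
    (h : before (b :: t) x y) : (x = b ∧ y ∈ t ∧ y ≠ b) ∨ (before t x y ∧ x ≠ b ∧ y ≠ b) := by
  obtain ⟨hx, hy, hlt⟩ := h
  have hyb : y ≠ b := by
    rintro rfl
    rw [List.idxOf_cons_self] at hlt; omega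
  have hyt : y ∈ t := by
    rcases List.mem_cons.1 hy with h | h
    · exact absurd h hyb
    · exact h
  by_cases hxb : x = b
  · exact Or.inl ⟨hxb, hyt, hyb⟩
  · right
    refine ⟨⟨?_, hyt, ?_⟩, hxb, hyb⟩
    · rcases List.mem_cons.1 hx with h | h
      · exact absurd h hxb
      · exact h
    · rw [List.idxOf_cons_ne _ (fun h' => hxb h'.symm),
        List.idxOf_cons_ne _ (fun h' => hyb h'.symm)] at hlt
      omega

theorem not_before_head {b : Pm n} {t : List (Pm n)} {x : Pm n} :
    ¬ before (b :: t) x b := by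
  rintro ⟨-, -, hlt⟩
  rw [List.idxOf_cons_self] at hlt
  omega

theorem before_total {l : List (Pm n)} {x y : Pm n} (hx : x ∈ l) (hy : y ∈ l)
    (hne : x ≠ y) : before l x y ∨ before l y x := by
  have : l.idxOf x ≠ l.idxOf y := fun h => hne ((List.idxOf_inj hx).1 h)
  rcases Nat.lt_or_ge (l.idxOf x) (l.idxOf y) with h | h
  · exact Or.inl ⟨hx, hy, h⟩
  · exact Or.inr ⟨hy, hx, lt_of_le_of_ne h (Ne.symm this)⟩

theorem before_asymm {l : List (Pm n)} {x y : Pm n} (h : before l x y) : ¬ before l y x := by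
  rintro ⟨-, -, h2⟩
  exact absurd h.2.2 (by omega)

theorem sorted_rel_of_before {r : Pm n → Pm n → Prop} {l : List (Pm n)}
    (hs : List.Pairwise r l) {x y : Pm n} (h : before l x y) : r x y := by
  induction l with
  | nil => exact absurd h.1 (List.not_mem_nil)
  | cons b t ih =>
    rcases before_cons_elim h with ⟨rfl, hyt, -⟩ | ⟨hb, -, -⟩
    · exact (List.pairwise_cons.1 hs).1 y hyt
    · exact ih (List.pairwise_cons.1 hs).2 hb

/-! ### admissibility consequences -/

section Adm

variable {A : Set (Pm n)} (hA : admissible A)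

theorem inC23_swap {i j : Fin n} (h : i < j) : inC23 (Equiv.swap i j) :=
  Or.inl ⟨i, j, h, rfl⟩

theorem inC23_Rc {i j k : Fin n} (h1 : i < j) (h2 : j < k) : inC23 (Rc i j k) :=
  Or.inr ⟨i, j, k, h1, h2, Or.inl rfl⟩

theorem inC23_Lc {i j k : Fin n} (h1 : i < j) (h2 : j < k) : inC23 (Lc i j k) :=
  Or.inr ⟨i, j, k, h1, h2, Or.inr rfl⟩

include hA

/-- downward closure for nested transpositions. -/
theorem clos_swap {i a b k : Fin n} (h1 : i ≤ a) (h2 : a < b) (h3 : b ≤ k)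
    (h : Equiv.swap i k ∈ A) : Equiv.swap a b ∈ A :=
  hA.2.1 _ h _ (inC23_swap h2) (swap_bruhat_le h1 h2 h3)

theorem clos_Rc {h i j k : Fin n} (h1 : h < i) (h2 : i < j) (h3 : j < k)
    (hm : Rc h i k ∈ A) : Rc h i j ∈ A :=
  hA.2.1 _ hm _ (inC23_Rc h1 h2) (B3 h1 h2 h3)

theorem clos_Lc {i j k q : Fin n} (h1 : i < j) (h2 : j < k) (h3 : k < q)
    (hm : Lc i k q ∈ A) : Lc j k q ∈ A :=
  hA.2.1 _ hm _ (inC23_Lc h2 h3) (B4 h1 h2 h3)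

/-- for `i<j<k` with `swap i j, swap j k ∈ A` but `swap i k ∉ A`,
exactly one of `Rc i j k`, `Lc i j k` lies in `A`. -/
theorem forced_dichotomy {i j k : Fin n} (h1 : i < j) (h2 : j < k)
    (hij : Equiv.swap i j ∈ A) (hjk : Equiv.swap j k ∈ A) (hik : Equiv.swap i k ∉ A) :
    (Rc i j k ∈ A ∧ Lc i j k ∉ A) ∨ (Lc i j k ∈ A ∧ Rc i j k ∉ A) := by
  have hor := hA.2.2.2 i j k h1 h2 hij hjk
  have hnotboth : ¬ (Rc i j k ∈ A ∧ Lc i j k ∈ A) := by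
    rintro ⟨hR, hL⟩
    exact hik (hA.2.2.1 i j j k h1 h2 h1 h2 hR hL)
  rcases hor with h | h
  · exact Or.inl ⟨h, fun hL => hnotboth ⟨h, hL⟩⟩
  · exact Or.inr ⟨h, fun hR => hnotboth ⟨hR, h⟩⟩

end Adm

/-! ### goodness of a list relative to `A` -/

section Good

variable (A : Set (Pm n))

/-- list goodness: the conditions a (suffix of a) compatible order satisfies. -/
def good (l : List (Pm n)) : Prop :=
  l.Nodup ∧ (∀ x ∈ l, x ∈ A ∧ isTransposition x) ∧
  (∀ i j k : Fin n, i < j → j < k → Equiv.swap i k ∉ A → Rc i j k ∈ A →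
      Equiv.swap i j ∈ l → Equiv.swap j k ∈ A →
      Equiv.swap j k ∈ l ∧ before l (Equiv.swap i j) (Equiv.swap j k)) ∧
  (∀ i j k : Fin n, i < j → j < k → Equiv.swap i k ∉ A → Lc i j k ∈ A →
      Equiv.swap j k ∈ l → Equiv.swap i j ∈ A →
      Equiv.swap i j ∈ l ∧ before l (Equiv.swap j k) (Equiv.swap i j)) ∧
  (∀ i j k : Fin n, i < j → j < k → Equiv.swap i k ∈ A →
      ((Equiv.swap i k ∉ l → Equiv.swap i j ∈ l → Equiv.swap j k ∈ l → False) ∧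
       (Equiv.swap i k ∈ l → Equiv.swap i j ∉ l → Equiv.swap j k ∉ l → False) ∧
       (Equiv.swap i k ∈ l → Equiv.swap i j ∈ l → Equiv.swap j k ∈ l →
         between l (Equiv.swap i j) (Equiv.swap i k) (Equiv.swap j k)) ∧
       (Equiv.swap i k ∈ l → Equiv.swap i j ∈ l → Equiv.swap j k ∉ l →
         before l (Equiv.swap i k) (Equiv.swap i j)) ∧
       (Equiv.swap i k ∈ l → Equiv.swap j k ∈ l → Equiv.swap i j ∉ l →
         before l (Equiv.swap i k) (Equiv.swap j k))))

/-- `a` may be moved to the front of a good list. -/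
def initial (l : List (Pm n)) (a : Pm n) : Prop :=
  (∀ i j k : Fin n, i < j → j < k → Equiv.swap i k ∉ A → Rc i j k ∈ A →
      Equiv.swap i j ∈ l → a ≠ Equiv.swap j k) ∧
  (∀ i j k : Fin n, i < j → j < k → Equiv.swap i k ∉ A → Lc i j k ∈ A →
      Equiv.swap j k ∈ l → a ≠ Equiv.swap i j) ∧
  (∀ i j k : Fin n, i < j → j < k → a = Equiv.swap i k →
      Equiv.swap i j ∈ l → Equiv.swap j k ∈ l → False) ∧
  (∀ i j k : Fin n, i < j → j < k → Equiv.swap i k ∈ l → a = Equiv.swap i j →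
      Equiv.swap j k ∉ l → False) ∧
  (∀ i j k : Fin n, i < j → j < k → Equiv.swap i k ∈ l → a = Equiv.swap j k →
      Equiv.swap i j ∉ l → False)

end Good

/-! ### swap distinctness helpers -/

theorem sw_ne_left {i j k : Fin n} (h1 : i < j) (h2 : j < k) :
    Equiv.swap i j ≠ Equiv.swap j k := by
  intro h
  obtain ⟨h3, -⟩ := swap_eq_iff h1 h2 h
  exact absurd h3 (ne_of_lt h1)

theorem sw_ne_mid_l {i j k : Fin n} (h1 : i < j) (h2 : j < k) :
    Equiv.swap i j ≠ Equiv.swap i k := by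
  intro h
  obtain ⟨-, h4⟩ := swap_eq_iff h1 (h1.trans h2) h
  exact absurd h4 (ne_of_lt h2)

theorem sw_ne_mid_r {i j k : Fin n} (h1 : i < j) (h2 : j < k) :
    Equiv.swap j k ≠ Equiv.swap i k := by
  intro h
  obtain ⟨h3, -⟩ := swap_eq_iff h2 (h1.trans h2) h
  exact absurd h3.symm (ne_of_lt h1)

theorem before_strip {b : Pm n} {t : List (Pm n)} {x y : Pm n}
    (h : before (b :: t) x y) (hx : x ∈ t) (hbt : b ∉ t) : before t x y := by
  rcases before_cons_elim h with ⟨rfl, -, -⟩ | ⟨hb, -, -⟩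
  · exact absurd hx hbt
  · exact hb

section TLemmas

variable {A : Set (Pm n)}

/-- the tail of a good list is good -/
theorem good_tail {b : Pm n} {t : List (Pm n)} (gl : good A (b :: t)) : good A t := by
  obtain ⟨hnd, hmem, g2R, g2L, g3⟩ := gl
  have hbt : b ∉ t := (List.nodup_cons.1 hnd).1
  have hndt : t.Nodup := (List.nodup_cons.1 hnd).2
  refine ⟨hndt, fun x hx => hmem x (List.mem_cons_of_mem _ hx), ?_, ?_, ?_⟩
  · intro i j k h1 h2 hik hR hij hjkA
    obtain ⟨hm, hb⟩ := g2R i j k h1 h2 hik hR (List.mem_cons_of_mem _ hij) hjkA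
    have hjkt : Equiv.swap j k ∈ t := by
      rcases List.mem_cons.1 hm with h | h
      · exact absurd (h ▸ hb) not_before_head
      · exact h
    exact ⟨hjkt, before_strip hb hij hbt⟩
  · intro i j k h1 h2 hik hL hjk hijA
    obtain ⟨hm, hb⟩ := g2L i j k h1 h2 hik hL (List.mem_cons_of_mem _ hjk) hijA
    have hijt : Equiv.swap i j ∈ t := by
      rcases List.mem_cons.1 hm with h | h
      · exact absurd (h ▸ hb) not_before_head
      · exact h
    exact ⟨hijt, before_strip hb hjk hbt⟩
  · intro i j k h1 h2 hikA
    obtain ⟨g3a, g3b, g3c, g3d, g3e⟩ := g3 i j k h1 h2 hikA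
    refine ⟨?_, ?_, ?_, ?_, ?_⟩
    · intro hM h1' h2'
      by_cases hMb : Equiv.swap i k = b
      · rcases g3c (List.mem_cons.2 (Or.inl hMb)) (List.mem_cons_of_mem _ h1')
          (List.mem_cons_of_mem _ h2') with ⟨hbf, -⟩ | ⟨hbf, -⟩ <;>
        · rw [hMb] at hbf; exact not_before_head hbf
      · exact g3a (fun hc => (by
          rcases List.mem_cons.1 hc with h | h
          · exact hMb h
          · exact hM h))
          (List.mem_cons_of_mem _ h1') (List.mem_cons_of_mem _ h2')
    · intro hM h1' h2'
      by_cases hb1 : Equiv.swap i j = b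
      · have h2l : Equiv.swap j k ∉ (b :: t) := by
          intro hc
          rcases List.mem_cons.1 hc with h | h
          · exact sw_ne_left h1 h2 (hb1.trans h.symm)
          · exact h2' h
        exact not_before_head (hb1 ▸ g3d (List.mem_cons_of_mem _ hM)
          (List.mem_cons.2 (Or.inl hb1)) h2l)
      · by_cases hb2 : Equiv.swap j k = b
        · have h1l : Equiv.swap i j ∉ (b :: t) := by
            intro hc
            rcases List.mem_cons.1 hc with h | h
            · exact hb1 h
            · exact h1' h
          exact not_before_head (hb2 ▸ g3e (List.mem_cons_of_mem _ hM)
            (List.mem_cons.2 (Or.inl hb2)) h1l)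
        · exact g3b (List.mem_cons_of_mem _ hM)
            (fun hc => by rcases List.mem_cons.1 hc with h | h; exacts [hb1 h, h1' h])
            (fun hc => by rcases List.mem_cons.1 hc with h | h; exacts [hb2 h, h2' h])
    · intro hM h1' h2'
      rcases g3c (List.mem_cons_of_mem _ hM) (List.mem_cons_of_mem _ h1')
        (List.mem_cons_of_mem _ h2') with ⟨ha, hb'⟩ | ⟨ha, hb'⟩
      · exact Or.inl ⟨before_strip ha h1' hbt, before_strip hb' hM hbt⟩
      · exact Or.inr ⟨before_strip ha h2' hbt, before_strip hb' hM hbt⟩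
    · intro hM h1' h2'
      by_cases hb2 : Equiv.swap j k = b
      · rcases g3c (List.mem_cons_of_mem _ hM) (List.mem_cons_of_mem _ h1')
          (List.mem_cons.2 (Or.inl hb2)) with ⟨-, hbf⟩ | ⟨-, hbf⟩
        · rw [hb2] at hbf; exact absurd hbf not_before_head
        · exact before_strip hbf hM hbt
      · exact before_strip (g3d (List.mem_cons_of_mem _ hM) (List.mem_cons_of_mem _ h1')
          (fun hc => by rcases List.mem_cons.1 hc with h | h; exacts [hb2 h, h2' h])) hM hbt
    · intro hM h2' h1'
      by_cases hb1 : Equiv.swap i j = b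
      · rcases g3c (List.mem_cons_of_mem _ hM) (List.mem_cons.2 (Or.inl hb1))
          (List.mem_cons_of_mem _ h2') with ⟨-, hbf⟩ | ⟨-, hbf⟩
        · exact before_strip hbf hM hbt
        · rw [hb1] at hbf; exact absurd hbf not_before_head
      · exact before_strip (g3e (List.mem_cons_of_mem _ hM) (List.mem_cons_of_mem _ h2')
          (fun hc => by rcases List.mem_cons.1 hc with h | h; exacts [hb1 h, h1' h])) hM hbt

/-- the head of a good list is initial -/
theorem initial_head {b : Pm n} {t : List (Pm n)} (gl : good A (b :: t)) :
    initial A (b :: t) b := by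
  obtain ⟨hnd, hmem, g2R, g2L, g3⟩ := gl
  refine ⟨?_, ?_, ?_, ?_, ?_⟩
  · intro i j k h1 h2 hik hR hij heq
    have hjkA : Equiv.swap j k ∈ A := (hmem _ (List.mem_cons.2 (Or.inl heq.symm))).1
    obtain ⟨-, hb⟩ := g2R i j k h1 h2 hik hR hij hjkA
    rw [← heq] at hb
    exact not_before_head hb
  · intro i j k h1 h2 hik hL hjk heq
    have hijA : Equiv.swap i j ∈ A := (hmem _ (List.mem_cons.2 (Or.inl heq.symm))).1
    obtain ⟨-, hb⟩ := g2L i j k h1 h2 hik hL hjk hijA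
    rw [← heq] at hb
    exact not_before_head hb
  · intro i j k h1 h2 heq hij hjk
    have hikA : Equiv.swap i k ∈ A := (hmem _ (List.mem_cons.2 (Or.inl heq.symm))).1
    rcases (g3 i j k h1 h2 hikA).2.2.1 (List.mem_cons.2 (Or.inl heq.symm)) hij hjk with
      ⟨hbf, -⟩ | ⟨hbf, -⟩ <;>
    · rw [← heq] at hbf; exact not_before_head hbf
  · intro i j k h1 h2 hik heq hjk
    have hikA : Equiv.swap i k ∈ A := (hmem _ hik).1
    have hbf := (g3 i j k h1 h2 hikA).2.2.2.1 hik (List.mem_cons.2 (Or.inl heq.symm)) hjk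
    rw [← heq] at hbf
    exact not_before_head hbf
  · intro i j k h1 h2 hik heq hij
    have hikA : Equiv.swap i k ∈ A := (hmem _ hik).1
    have hbf := (g3 i j k h1 h2 hikA).2.2.2.2 hik (List.mem_cons.2 (Or.inl heq.symm)) hij
    rw [← heq] at hbf
    exact not_before_head hbf

end TLemmas

section TLemmas2

variable {A : Set (Pm n)}

theorem mem_iff_of_cons {b : Pm n} {t u : List (Pm n)} (hme : ∀ x, x ∈ u ↔ x ∈ t) :
    ∀ x, x ∈ (b :: u) ↔ x ∈ (b :: t) := by
  intro x
  simp only [List.mem_cons, hme]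

/-- prepending the old head to a reordered good tail -/
theorem good_prepend {b : Pm n} {t u : List (Pm n)} (gl : good A (b :: t)) (gu : good A u)
    (hme : ∀ x, x ∈ u ↔ x ∈ t) : good A (b :: u) := by
  obtain ⟨hnd, hmem, g2R, g2L, g3⟩ := gl
  obtain ⟨hndu, hmemu, g2Ru, g2Lu, g3u⟩ := gu
  have hbt : b ∉ t := (List.nodup_cons.1 hnd).1
  have hbu : b ∉ u := fun h => hbt ((hme b).1 h)
  have hne_of_mem : ∀ x ∈ u, x ≠ b := fun x hx he => hbu (he ▸ hx)
  refine ⟨List.nodup_cons.2 ⟨hbu, hndu⟩, ?_, ?_, ?_, ?_⟩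
  · intro x hx
    rcases List.mem_cons.1 hx with rfl | hx
    · exact hmem x (List.mem_cons_self)
    · exact hmemu x hx
  · intro i j k h1 h2 hik hR hij hjkA
    rcases List.mem_cons.1 hij with hb1 | hiju
    · obtain ⟨hm, -⟩ := g2R i j k h1 h2 hik hR (List.mem_cons.2 (Or.inl hb1)) hjkA
      have hjkne : Equiv.swap j k ≠ b := fun he => sw_ne_left h1 h2 (hb1.trans he.symm)
      have hjkt : Equiv.swap j k ∈ t := by
        rcases List.mem_cons.1 hm with h | h
        · exact absurd h hjkne
        · exact h
      have hjku : Equiv.swap j k ∈ u := (hme _).2 hjkt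
      refine ⟨List.mem_cons_of_mem _ hjku, ?_⟩
      rw [hb1]
      exact before_head hjku hjkne
    · obtain ⟨hm, hbf⟩ := g2Ru i j k h1 h2 hik hR hiju hjkA
      exact ⟨List.mem_cons_of_mem _ hm,
        before_cons hbf (hne_of_mem _ hiju) (hne_of_mem _ hm)⟩
  · intro i j k h1 h2 hik hL hjk hijA
    rcases List.mem_cons.1 hjk with hb1 | hjku
    · obtain ⟨hm, -⟩ := g2L i j k h1 h2 hik hL (List.mem_cons.2 (Or.inl hb1)) hijA
      have hijne : Equiv.swap i j ≠ b := fun he => sw_ne_left h1 h2 (he.trans hb1.symm)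
      have hijt : Equiv.swap i j ∈ t := by
        rcases List.mem_cons.1 hm with h | h
        · exact absurd h hijne
        · exact h
      have hiju : Equiv.swap i j ∈ u := (hme _).2 hijt
      refine ⟨List.mem_cons_of_mem _ hiju, ?_⟩
      rw [hb1]
      exact before_head hiju hijne
    · obtain ⟨hm, hbf⟩ := g2Lu i j k h1 h2 hik hL hjku hijA
      exact ⟨List.mem_cons_of_mem _ hm,
        before_cons hbf (hne_of_mem _ hjku) (hne_of_mem _ hm)⟩
  · intro i j k h1 h2 hikA
    obtain ⟨g3a, g3b, g3c, g3d, g3e⟩ := g3 i j k h1 h2 hikA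
    obtain ⟨g3au, g3bu, g3cu, g3du, g3eu⟩ := g3u i j k h1 h2 hikA
    have memconv : ∀ z : Pm n, z ∈ (b :: u) ↔ z ∈ (b :: t) := mem_iff_of_cons hme
    refine ⟨?_, ?_, ?_, ?_, ?_⟩
    · intro hM h1' h2'
      exact g3a (fun h => hM ((memconv _).2 h)) ((memconv _).1 h1') ((memconv _).1 h2')
    · intro hM h1' h2'
      exact g3b ((memconv _).1 hM) (fun h => h1' ((memconv _).2 h)) (fun h => h2' ((memconv _).2 h))
    · intro hM h1' h2'
      rcases List.mem_cons.1 hM with hMb | hMu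
      · -- M = b : impossible since in (b::t) betweenness fails at the head
        rcases g3c ((memconv _).1 hM) ((memconv _).1 h1') ((memconv _).1 h2') with
          ⟨hbf, -⟩ | ⟨hbf, -⟩ <;>
        · rw [hMb] at hbf; exact absurd hbf not_before_head
      · rcases List.mem_cons.1 h1' with hE1b | hE1u
        · -- E1 = b
          have hE2u : Equiv.swap j k ∈ u := by
            rcases List.mem_cons.1 h2' with h | h
            · exact absurd (hE1b.trans h.symm) (sw_ne_left h1 h2)
            · exact h
          have hE1nu : Equiv.swap i j ∉ u := fun h => hbu (hE1b ▸ h)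
          left
          constructor
          · rw [hE1b]; exact before_head hMu (hne_of_mem _ hMu)
          · exact before_cons (g3eu hMu hE2u hE1nu) (hne_of_mem _ hMu) (hne_of_mem _ hE2u)
        · rcases List.mem_cons.1 h2' with hE2b | hE2u
          · -- E2 = b
            have hE2nu : Equiv.swap j k ∉ u := fun h => hbu (hE2b ▸ h)
            right
            constructor
            · rw [hE2b]; exact before_head hMu (hne_of_mem _ hMu)
            · exact before_cons (g3du hMu hE1u hE2nu) (hne_of_mem _ hMu) (hne_of_mem _ hE1u)
          · rcases g3cu hMu hE1u hE2u with ⟨ha, hb'⟩ | ⟨ha, hb'⟩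
            · exact Or.inl ⟨before_cons ha (hne_of_mem _ hE1u) (hne_of_mem _ hMu),
                before_cons hb' (hne_of_mem _ hMu) (hne_of_mem _ hE2u)⟩
            · exact Or.inr ⟨before_cons ha (hne_of_mem _ hE2u) (hne_of_mem _ hMu),
                before_cons hb' (hne_of_mem _ hMu) (hne_of_mem _ hE1u)⟩
    · intro hM h1' h2'
      have hE2nt : Equiv.swap j k ∉ (b :: t) := fun h => h2' ((memconv _).2 h)
      rcases List.mem_cons.1 hM with hMb | hMu
      · -- M = b : then E1 must come after the head, fine
        have hE1u : Equiv.swap i j ∈ u := by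
          rcases List.mem_cons.1 h1' with h | h
          · exact absurd (h.trans hMb.symm) (sw_ne_mid_l h1 h2)
          · exact h
        rw [hMb]; exact before_head hE1u (hne_of_mem _ hE1u)
      · rcases List.mem_cons.1 h1' with hE1b | hE1u
        · -- E1 = b : contradiction with goodness of b::t
          have := g3d ((memconv _).1 hM) (List.mem_cons.2 (Or.inl hE1b)) hE2nt
          rw [hE1b] at this
          exact absurd this not_before_head
        · have hE2nu : Equiv.swap j k ∉ u := fun h => h2' (List.mem_cons_of_mem _ h)
          exact before_cons (g3du hMu hE1u hE2nu) (hne_of_mem _ hMu) (hne_of_mem _ hE1u)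
    · intro hM h2' h1'
      have hE1nt : Equiv.swap i j ∉ (b :: t) := fun h => h1' ((memconv _).2 h)
      rcases List.mem_cons.1 hM with hMb | hMu
      · have hE2u : Equiv.swap j k ∈ u := by
          rcases List.mem_cons.1 h2' with h | h
          · exact absurd (h.trans hMb.symm) (sw_ne_mid_r h1 h2)
          · exact h
        rw [hMb]; exact before_head hE2u (hne_of_mem _ hE2u)
      · rcases List.mem_cons.1 h2' with hE2b | hE2u
        · have := g3e ((memconv _).1 hM) (List.mem_cons.2 (Or.inl hE2b)) hE1nt
          rw [hE2b] at this
          exact absurd this not_before_head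
        · have hE1nu : Equiv.swap i j ∉ u := fun h => h1' (List.mem_cons_of_mem _ h)
          exact before_cons (g3eu hMu hE2u hE1nu) (hne_of_mem _ hMu) (hne_of_mem _ hE2u)

end TLemmas2

section TU

/-- if two distinct members of the triple family `(i',j',k')` lie in the family `(i,j,k)`,
the triples coincide.  Variant for the pair `(swap i' j', swap i' k')`. -/
theorem TU12 {i j k i' j' k' : Fin n} (o1 : i < j) (o2 : j < k) (o1' : i' < j') (o2' : j' < k')
    (h1 : Equiv.swap i' j' = Equiv.swap i j ∨ Equiv.swap i' j' = Equiv.swap i k ∨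
          Equiv.swap i' j' = Equiv.swap j k)
    (h2 : Equiv.swap i' k' = Equiv.swap i j ∨ Equiv.swap i' k' = Equiv.swap i k ∨
          Equiv.swap i' k' = Equiv.swap j k) :
    i' = i ∧ j' = j ∧ k' = k := by
  have o3 := o1.trans o2
  have o3' := o1'.trans o2'
  rcases h1 with e1 | e1 | e1 <;> rcases h2 with e2 | e2 | e2 <;>
  [ obtain ⟨a1,a2⟩ := swap_eq_iff o1' o1 e1; obtain ⟨a1,a2⟩ := swap_eq_iff o1' o1 e1;
    obtain ⟨a1,a2⟩ := swap_eq_iff o1' o1 e1; obtain ⟨a1,a2⟩ := swap_eq_iff o1' o3 e1;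
    obtain ⟨a1,a2⟩ := swap_eq_iff o1' o3 e1; obtain ⟨a1,a2⟩ := swap_eq_iff o1' o3 e1;
    obtain ⟨a1,a2⟩ := swap_eq_iff o1' o2 e1; obtain ⟨a1,a2⟩ := swap_eq_iff o1' o2 e1;
    obtain ⟨a1,a2⟩ := swap_eq_iff o1' o2 e1] <;>
  [ obtain ⟨b1,b2⟩ := swap_eq_iff o3' o1 e2; obtain ⟨b1,b2⟩ := swap_eq_iff o3' o3 e2;
    obtain ⟨b1,b2⟩ := swap_eq_iff o3' o2 e2; obtain ⟨b1,b2⟩ := swap_eq_iff o3' o1 e2;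
    obtain ⟨b1,b2⟩ := swap_eq_iff o3' o3 e2; obtain ⟨b1,b2⟩ := swap_eq_iff o3' o2 e2;
    obtain ⟨b1,b2⟩ := swap_eq_iff o3' o1 e2; obtain ⟨b1,b2⟩ := swap_eq_iff o3' o3 e2;
    obtain ⟨b1,b2⟩ := swap_eq_iff o3' o2 e2] <;>
  · simp only [Fin.ext_iff, Fin.lt_def] at a1 a2 b1 b2 o1 o2 o1' o2' o3 o3' ⊢
    omega

theorem TU13 {i j k i' j' k' : Fin n} (o1 : i < j) (o2 : j < k) (o1' : i' < j') (o2' : j' < k')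
    (h1 : Equiv.swap i' j' = Equiv.swap i j ∨ Equiv.swap i' j' = Equiv.swap i k ∨
          Equiv.swap i' j' = Equiv.swap j k)
    (h2 : Equiv.swap j' k' = Equiv.swap i j ∨ Equiv.swap j' k' = Equiv.swap i k ∨
          Equiv.swap j' k' = Equiv.swap j k) :
    i' = i ∧ j' = j ∧ k' = k := by
  have o3 := o1.trans o2
  have o3' := o1'.trans o2'
  rcases h1 with e1 | e1 | e1 <;> rcases h2 with e2 | e2 | e2 <;>
  [ obtain ⟨a1,a2⟩ := swap_eq_iff o1' o1 e1; obtain ⟨a1,a2⟩ := swap_eq_iff o1' o1 e1;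
    obtain ⟨a1,a2⟩ := swap_eq_iff o1' o1 e1; obtain ⟨a1,a2⟩ := swap_eq_iff o1' o3 e1;
    obtain ⟨a1,a2⟩ := swap_eq_iff o1' o3 e1; obtain ⟨a1,a2⟩ := swap_eq_iff o1' o3 e1;
    obtain ⟨a1,a2⟩ := swap_eq_iff o1' o2 e1; obtain ⟨a1,a2⟩ := swap_eq_iff o1' o2 e1;
    obtain ⟨a1,a2⟩ := swap_eq_iff o1' o2 e1] <;>
  [ obtain ⟨b1,b2⟩ := swap_eq_iff o2' o1 e2; obtain ⟨b1,b2⟩ := swap_eq_iff o2' o3 e2;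
    obtain ⟨b1,b2⟩ := swap_eq_iff o2' o2 e2; obtain ⟨b1,b2⟩ := swap_eq_iff o2' o1 e2;
    obtain ⟨b1,b2⟩ := swap_eq_iff o2' o3 e2; obtain ⟨b1,b2⟩ := swap_eq_iff o2' o2 e2;
    obtain ⟨b1,b2⟩ := swap_eq_iff o2' o1 e2; obtain ⟨b1,b2⟩ := swap_eq_iff o2' o3 e2;
    obtain ⟨b1,b2⟩ := swap_eq_iff o2' o2 e2] <;>
  · simp only [Fin.ext_iff, Fin.lt_def] at a1 a2 b1 b2 o1 o2 o1' o2' o3 o3' ⊢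
    omega

theorem TU23 {i j k i' j' k' : Fin n} (o1 : i < j) (o2 : j < k) (o1' : i' < j') (o2' : j' < k')
    (h1 : Equiv.swap i' k' = Equiv.swap i j ∨ Equiv.swap i' k' = Equiv.swap i k ∨
          Equiv.swap i' k' = Equiv.swap j k)
    (h2 : Equiv.swap j' k' = Equiv.swap i j ∨ Equiv.swap j' k' = Equiv.swap i k ∨
          Equiv.swap j' k' = Equiv.swap j k) :
    i' = i ∧ j' = j ∧ k' = k := by
  have o3 := o1.trans o2
  have o3' := o1'.trans o2'
  rcases h1 with e1 | e1 | e1 <;> rcases h2 with e2 | e2 | e2 <;>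
  [ obtain ⟨a1,a2⟩ := swap_eq_iff o3' o1 e1; obtain ⟨a1,a2⟩ := swap_eq_iff o3' o1 e1;
    obtain ⟨a1,a2⟩ := swap_eq_iff o3' o1 e1; obtain ⟨a1,a2⟩ := swap_eq_iff o3' o3 e1;
    obtain ⟨a1,a2⟩ := swap_eq_iff o3' o3 e1; obtain ⟨a1,a2⟩ := swap_eq_iff o3' o3 e1;
    obtain ⟨a1,a2⟩ := swap_eq_iff o3' o2 e1; obtain ⟨a1,a2⟩ := swap_eq_iff o3' o2 e1;
    obtain ⟨a1,a2⟩ := swap_eq_iff o3' o2 e1] <;>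
  [ obtain ⟨b1,b2⟩ := swap_eq_iff o2' o1 e2; obtain ⟨b1,b2⟩ := swap_eq_iff o2' o3 e2;
    obtain ⟨b1,b2⟩ := swap_eq_iff o2' o2 e2; obtain ⟨b1,b2⟩ := swap_eq_iff o2' o1 e2;
    obtain ⟨b1,b2⟩ := swap_eq_iff o2' o3 e2; obtain ⟨b1,b2⟩ := swap_eq_iff o2' o2 e2;
    obtain ⟨b1,b2⟩ := swap_eq_iff o2' o1 e2; obtain ⟨b1,b2⟩ := swap_eq_iff o2' o3 e2;
    obtain ⟨b1,b2⟩ := swap_eq_iff o2' o2 e2] <;>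
  · simp only [Fin.ext_iff, Fin.lt_def] at a1 a2 b1 b2 o1 o2 o1' o2' o3 o3' ⊢
    omega

end TU

section T4

variable {A : Set (Pm n)}

theorem mem_swap2 {a b : Pm n} {w : List (Pm n)} :
    ∀ z : Pm n, z ∈ (b :: a :: w) ↔ z ∈ (a :: b :: w) := by
  intro z
  simp only [List.mem_cons]
  tauto

theorem before_headswap {a b x y : Pm n} {w : List (Pm n)} (haw : a ∉ w) (hab : a ≠ b)
    (h : before (b :: a :: w) x y) (hne : ¬(x = b ∧ y = a)) : before (a :: b :: w) x y := by
  rcases before_cons_elim h with ⟨rfl, hy, hyb⟩ | ⟨h', hxb, hyb⟩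
  · -- x = b
    rcases List.mem_cons.1 hy with rfl | hyw
    · exact absurd ⟨rfl, rfl⟩ hne
    · have hya : y ≠ a := fun he => haw (he ▸ hyw)
      exact before_cons (before_head hyw hyb) hab.symm hya
  · rcases before_cons_elim h' with ⟨rfl, hy, hya⟩ | ⟨h'', hxa, hya⟩
    · exact before_head (List.mem_cons_of_mem _ hy) hya
    · exact before_cons (before_cons h'' hxb hyb) hxa hya

/-- swapping two adjacent commuting transpositions at the head of a good list -/
theorem good_headswap {p q c d : Fin n} (hpq : p < q) (hcd : c < d)
    (d1 : p ≠ c) (d2 : p ≠ d) (d3 : q ≠ c) (d4 : q ≠ d)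
    {w : List (Pm n)} (gl : good A (Equiv.swap c d :: Equiv.swap p q :: w)) :
    good A (Equiv.swap p q :: Equiv.swap c d :: w) := by
  obtain ⟨hnd, hmem, g2R, g2L, g3⟩ := gl
  have haw : Equiv.swap p q ∉ w := by
    have := (List.nodup_cons.1 hnd).2
    exact (List.nodup_cons.1 this).1
  have hab : Equiv.swap p q ≠ Equiv.swap c d := by
    intro he
    obtain ⟨e1, e2⟩ := swap_eq_iff hpq hcd he
    exact d1 e1
  have hbne : Equiv.swap c d ∉ (Equiv.swap p q :: w) := (List.nodup_cons.1 hnd).1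
  have trans : ∀ x y : Pm n, before (Equiv.swap c d :: Equiv.swap p q :: w) x y →
      ¬(x = Equiv.swap c d ∧ y = Equiv.swap p q) →
      before (Equiv.swap p q :: Equiv.swap c d :: w) x y :=
    fun x y h hne => before_headswap haw hab h hne
  refine ⟨?_, ?_, ?_, ?_, ?_⟩
  · -- nodup
    rw [List.nodup_cons] at hnd ⊢
    obtain ⟨h1', h2'⟩ := hnd
    rw [List.nodup_cons] at h2' ⊢
    refine ⟨?_, ?_, h2'.2⟩
    · simp only [List.mem_cons, not_or]
      exact ⟨hab, h2'.1⟩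
    · intro hc
      exact h1' (List.mem_cons_of_mem _ hc)
  · intro x hx
    exact hmem x ((mem_swap2 x).1 hx)
  · intro i j k h1 h2 hik hR hij hjkA
    obtain ⟨hm, hbf⟩ := g2R i j k h1 h2 hik hR ((mem_swap2 _).1 hij) hjkA
    refine ⟨(mem_swap2 _).1 hm, trans _ _ hbf ?_⟩
    rintro ⟨e1, e2⟩
    obtain ⟨a1, a2⟩ := swap_eq_iff h1 hcd e1
    obtain ⟨b1, b2⟩ := swap_eq_iff h2 hpq e2
    exact d2 (b1.symm.trans a2)
  · intro i j k h1 h2 hik hL hjk hijA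
    obtain ⟨hm, hbf⟩ := g2L i j k h1 h2 hik hL ((mem_swap2 _).1 hjk) hijA
    refine ⟨(mem_swap2 _).1 hm, trans _ _ hbf ?_⟩
    rintro ⟨e1, e2⟩
    obtain ⟨a1, a2⟩ := swap_eq_iff h2 hcd e1
    obtain ⟨b1, b2⟩ := swap_eq_iff h1 hpq e2
    exact d3 (b2.symm.trans a1)
  · intro i j k h1 h2 hikA
    have h3 := h1.trans h2
    obtain ⟨g3a, g3b, g3c, g3d, g3e⟩ := g3 i j k h1 h2 hikA
    have nEM : ¬(Equiv.swap i j = Equiv.swap c d ∧ Equiv.swap i k = Equiv.swap p q) := by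
      rintro ⟨e1, e2⟩
      obtain ⟨a1, a2⟩ := swap_eq_iff h1 hcd e1
      obtain ⟨b1, b2⟩ := swap_eq_iff h3 hpq e2
      exact d1 (b1.symm.trans a1)
    have nME1 : ¬(Equiv.swap i k = Equiv.swap c d ∧ Equiv.swap i j = Equiv.swap p q) := by
      rintro ⟨e1, e2⟩
      obtain ⟨a1, a2⟩ := swap_eq_iff h3 hcd e1
      obtain ⟨b1, b2⟩ := swap_eq_iff h1 hpq e2
      exact d1 (b1.symm.trans a1)
    have nME2 : ¬(Equiv.swap i k = Equiv.swap c d ∧ Equiv.swap j k = Equiv.swap p q) := by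
      rintro ⟨e1, e2⟩
      obtain ⟨a1, a2⟩ := swap_eq_iff h3 hcd e1
      obtain ⟨b1, b2⟩ := swap_eq_iff h2 hpq e2
      exact d4 (b2.symm.trans a2)
    have nE2M : ¬(Equiv.swap j k = Equiv.swap c d ∧ Equiv.swap i k = Equiv.swap p q) := by
      rintro ⟨e1, e2⟩
      obtain ⟨a1, a2⟩ := swap_eq_iff h2 hcd e1
      obtain ⟨b1, b2⟩ := swap_eq_iff h3 hpq e2
      exact d4 (b2.symm.trans a2)
    refine ⟨?_, ?_, ?_, ?_, ?_⟩
    · intro hM h1' h2'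
      exact g3a (fun h => hM ((mem_swap2 _).2 h)) ((mem_swap2 _).1 h1') ((mem_swap2 _).1 h2')
    · intro hM h1' h2'
      exact g3b ((mem_swap2 _).1 hM) (fun h => h1' ((mem_swap2 _).2 h))
        (fun h => h2' ((mem_swap2 _).2 h))
    · intro hM h1' h2'
      rcases g3c ((mem_swap2 _).1 hM) ((mem_swap2 _).1 h1') ((mem_swap2 _).1 h2') with
        ⟨ha, hb'⟩ | ⟨ha, hb'⟩
      · exact Or.inl ⟨trans _ _ ha nEM, trans _ _ hb' nME2⟩
      · exact Or.inr ⟨trans _ _ ha nE2M, trans _ _ hb' nME1⟩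
    · intro hM h1' h2'
      exact trans _ _ (g3d ((mem_swap2 _).1 hM) ((mem_swap2 _).1 h1')
        (fun h => h2' ((mem_swap2 _).2 h))) nME1
    · intro hM h2' h1'
      exact trans _ _ (g3e ((mem_swap2 _).1 hM) ((mem_swap2 _).1 h2')
        (fun h => h1' ((mem_swap2 _).2 h))) nME2

end T4

section T5

variable {A : Set (Pm n)}

theorem mem_swap3 {x m y : Pm n} {w : List (Pm n)} :
    ∀ z : Pm n, z ∈ (x :: m :: y :: w) ↔ z ∈ (y :: m :: x :: w) := by
  intro z
  simp only [List.mem_cons]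
  tauto

/-- reversing the triple at the head of a good list -/
theorem good_braid {i j k : Fin n} (h1 : i < j) (h2 : j < k) {x y : Pm n} {w : List (Pm n)}
    (hxy : (x = Equiv.swap i j ∧ y = Equiv.swap j k) ∨ (x = Equiv.swap j k ∧ y = Equiv.swap i j))
    (gl : good A (x :: Equiv.swap i k :: y :: w)) :
    good A (y :: Equiv.swap i k :: x :: w) := by
  have h3 := h1.trans h2
  set m := Equiv.swap i k with hm
  obtain ⟨hnd, hmem, g2R, g2L, g3⟩ := gl
  have hxm : x ≠ m := by
    rcases hxy with ⟨rfl, -⟩ | ⟨rfl, -⟩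
    · exact sw_ne_mid_l h1 h2
    · exact sw_ne_mid_r h1 h2
  have hym : y ≠ m := by
    rcases hxy with ⟨-, rfl⟩ | ⟨-, rfl⟩
    · exact sw_ne_mid_r h1 h2
    · exact sw_ne_mid_l h1 h2
  have hxyne : x ≠ y := by
    rcases hxy with ⟨rfl, rfl⟩ | ⟨rfl, rfl⟩
    · exact sw_ne_left h1 h2
    · exact (sw_ne_left h1 h2).symm
  have hnd1 := List.nodup_cons.1 hnd
  have hnd2 := List.nodup_cons.1 hnd1.2
  have hnd3 := List.nodup_cons.1 hnd2.2
  have hxw : x ∉ w := fun h => hnd1.1 (List.mem_cons_of_mem _ (List.mem_cons_of_mem _ h))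
  have hmw : m ∉ w := fun h => hnd2.1 (List.mem_cons_of_mem _ h)
  have hyw : y ∉ w := hnd3.1
  have hwnd : w.Nodup := hnd3.2
  have hmA : m ∈ A := (hmem m (List.mem_cons_of_mem _ (List.mem_cons_self))).1
  have bYM : before (y :: m :: x :: w) y m :=
    before_head (List.mem_cons_self) hym.symm
  have bMX : before (y :: m :: x :: w) m x :=
    before_cons (before_head (List.mem_cons_self) hxm) hym.symm hxyne
  have bYw : ∀ v ∈ w, before (y :: m :: x :: w) y v := fun v hv =>
    before_head (List.mem_cons_of_mem _ (List.mem_cons_of_mem _ hv))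
      (fun he => hyw (he ▸ hv))
  have bMw : ∀ v ∈ w, before (y :: m :: x :: w) m v := fun v hv =>
    before_cons (before_head (List.mem_cons_of_mem _ hv) (fun he => hmw (he ▸ hv)))
      hym.symm (fun he => hyw (he ▸ hv))
  have bXw : ∀ v ∈ w, before (y :: m :: x :: w) x v := fun v hv =>
    before_cons (before_cons (before_head hv (fun he => hxw (he ▸ hv)))
      hxm (fun he => hmw (he ▸ hv))) hxyne (fun he => hyw (he ▸ hv))
  have btrans : ∀ u v : Pm n, before (x :: m :: y :: w) u v → (u ∈ w ∨ v ∈ w) →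
      before (y :: m :: x :: w) u v := by
    intro u v h hs
    rcases before_cons_elim h with ⟨rfl, hv, -⟩ | ⟨h', hux, hvx⟩
    · rcases List.mem_cons.1 hv with rfl | hv'
      · exact absurd hs (by simp [hmw, hxw])
      · rcases List.mem_cons.1 hv' with rfl | hv''
        · exact absurd hs (by simp [hyw, hxw])
        · exact bXw _ hv''
    · rcases before_cons_elim h' with ⟨rfl, hv, -⟩ | ⟨h'', hum, hvm⟩
      · rcases List.mem_cons.1 hv with rfl | hv'
        · exact absurd hs (by simp [hmw, hyw])
        · exact bMw _ hv'
      · rcases before_cons_elim h'' with ⟨rfl, hv, -⟩ | ⟨hr, huy, hvy⟩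
        · rcases hs with h | h
          · exact absurd h hyw
          · exact bYw _ h
        · exact before_cons (before_cons (before_cons hr hux hvx) hum hvm) huy hvy
  have memcase : ∀ z : Pm n, z ∈ (y :: m :: x :: w) →
      (z = Equiv.swap i j ∨ z = Equiv.swap i k ∨ z = Equiv.swap j k) ∨ z ∈ w := by
    intro z hz
    rcases List.mem_cons.1 hz with rfl | hz'
    · rcases hxy with ⟨-, rfl⟩ | ⟨-, rfl⟩
      · exact Or.inl (Or.inr (Or.inr rfl))
      · exact Or.inl (Or.inl rfl)
    · rcases List.mem_cons.1 hz' with rfl | hz''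
      · exact Or.inl (Or.inr (Or.inl rfl))
      · rcases List.mem_cons.1 hz'' with rfl | hz3
        · rcases hxy with ⟨rfl, -⟩ | ⟨rfl, -⟩
          · exact Or.inl (Or.inl rfl)
          · exact Or.inl (Or.inr (Or.inr rfl))
        · exact Or.inr hz3
  have hmain : between (y :: m :: x :: w) (Equiv.swap i j) m (Equiv.swap j k) := by
    rcases hxy with ⟨hx', hy'⟩ | ⟨hx', hy'⟩
    · right
      rw [← hx', ← hy']
      exact ⟨bYM, bMX⟩
    · left
      rw [← hx', ← hy']
      exact ⟨bYM, bMX⟩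
  refine ⟨?_, ?_, ?_, ?_, ?_⟩
  · refine List.nodup_cons.2 ⟨?_, List.nodup_cons.2 ⟨?_, List.nodup_cons.2 ⟨hxw, hwnd⟩⟩⟩
    · simp only [List.mem_cons, not_or]
      exact ⟨hym, hxyne.symm, hyw⟩
    · simp only [List.mem_cons, not_or]
      exact ⟨hxm.symm, hmw⟩
  · intro z hz
    exact hmem z ((mem_swap3 z).2 hz)
  · intro i' j' k' h1' h2' hik' hR' hij' hjkA'
    obtain ⟨hm', hbf⟩ := g2R i' j' k' h1' h2' hik' hR' ((mem_swap3 _).2 hij') hjkA'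
    refine ⟨(mem_swap3 _).1 hm', ?_⟩
    rcases memcase _ hij' with ht1 | hw1
    · rcases memcase _ ((mem_swap3 _).1 hm') with ht2 | hw2
      · obtain ⟨rfl, rfl, rfl⟩ := TU13 h1 h2 h1' h2' ht1 ht2
        exact absurd hmA hik'
      · exact btrans _ _ hbf (Or.inr hw2)
    · exact btrans _ _ hbf (Or.inl hw1)
  · intro i' j' k' h1' h2' hik' hL' hjk' hijA'
    obtain ⟨hm', hbf⟩ := g2L i' j' k' h1' h2' hik' hL' ((mem_swap3 _).2 hjk') hijA'
    refine ⟨(mem_swap3 _).1 hm', ?_⟩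
    rcases memcase _ hjk' with ht1 | hw1
    · rcases memcase _ ((mem_swap3 _).1 hm') with ht2 | hw2
      · obtain ⟨rfl, rfl, rfl⟩ := TU13 h1 h2 h1' h2' ht2 ht1
        exact absurd hmA hik'
      · exact btrans _ _ hbf (Or.inr hw2)
    · exact btrans _ _ hbf (Or.inl hw1)
  · intro i' j' k' h1' h2' hikA'
    obtain ⟨g3a, g3b, g3c, g3d, g3e⟩ := g3 i' j' k' h1' h2' hikA'
    refine ⟨?_, ?_, ?_, ?_, ?_⟩
    · intro hM h1'' h2''
      exact g3a (fun h => hM ((mem_swap3 _).1 h)) ((mem_swap3 _).2 h1'') ((mem_swap3 _).2 h2'')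
    · intro hM h1'' h2''
      exact g3b ((mem_swap3 _).2 hM) (fun h => h1'' ((mem_swap3 _).1 h))
        (fun h => h2'' ((mem_swap3 _).1 h))
    · intro hM h1'' h2''
      rcases memcase _ h1'' with ht1 | hw1
      · rcases memcase _ hM with ht2 | hw2
        · obtain ⟨rfl, rfl, rfl⟩ := TU12 h1 h2 h1' h2' ht1 ht2
          exact hmain
        · rcases memcase _ h2'' with ht3 | hw3
          · obtain ⟨rfl, rfl, rfl⟩ := TU13 h1 h2 h1' h2' ht1 ht3
            exact hmain
          · rcases g3c ((mem_swap3 _).2 hM) ((mem_swap3 _).2 h1'') ((mem_swap3 _).2 h2'') with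
              ⟨ha, hb'⟩ | ⟨ha, hb'⟩
            · exact Or.inl ⟨btrans _ _ ha (Or.inr hw2), btrans _ _ hb' (Or.inl hw2)⟩
            · exact Or.inr ⟨btrans _ _ ha (Or.inl hw3), btrans _ _ hb' (Or.inl hw2)⟩
      · rcases memcase _ hM with ht2 | hw2
        · rcases memcase _ h2'' with ht3 | hw3
          · obtain ⟨rfl, rfl, rfl⟩ := TU23 h1 h2 h1' h2' ht2 ht3
            exact hmain
          · rcases g3c ((mem_swap3 _).2 hM) ((mem_swap3 _).2 h1'') ((mem_swap3 _).2 h2'') with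
              ⟨ha, hb'⟩ | ⟨ha, hb'⟩
            · exact Or.inl ⟨btrans _ _ ha (Or.inl hw1), btrans _ _ hb' (Or.inr hw3)⟩
            · exact Or.inr ⟨btrans _ _ ha (Or.inl hw3), btrans _ _ hb' (Or.inr hw1)⟩
        · rcases g3c ((mem_swap3 _).2 hM) ((mem_swap3 _).2 h1'') ((mem_swap3 _).2 h2'') with
            ⟨ha, hb'⟩ | ⟨ha, hb'⟩
          · exact Or.inl ⟨btrans _ _ ha (Or.inl hw1), btrans _ _ hb' (Or.inl hw2)⟩
          · exact Or.inr ⟨btrans _ _ ha (Or.inr hw2), btrans _ _ hb' (Or.inl hw2)⟩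
    · intro hM h1'' h2''
      rcases memcase _ hM with ht2 | hw2
      · rcases memcase _ h1'' with ht1 | hw1
        · obtain ⟨rfl, rfl, rfl⟩ := TU12 h1 h2 h1' h2' ht1 ht2
          exfalso
          apply h2''
          rcases hxy with ⟨rfl, rfl⟩ | ⟨rfl, rfl⟩
          · exact List.mem_cons_self
          · exact List.mem_cons_of_mem _ (List.mem_cons_of_mem _ (List.mem_cons_self))
        · exact btrans _ _ (g3d ((mem_swap3 _).2 hM) ((mem_swap3 _).2 h1'')
            (fun h => h2'' ((mem_swap3 _).1 h))) (Or.inr hw1)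
      · exact btrans _ _ (g3d ((mem_swap3 _).2 hM) ((mem_swap3 _).2 h1'')
          (fun h => h2'' ((mem_swap3 _).1 h))) (Or.inl hw2)
    · intro hM h2'' h1''
      rcases memcase _ hM with ht2 | hw2
      · rcases memcase _ h2'' with ht3 | hw3
        · obtain ⟨rfl, rfl, rfl⟩ := TU23 h1 h2 h1' h2' ht2 ht3
          exfalso
          apply h1''
          rcases hxy with ⟨rfl, rfl⟩ | ⟨rfl, rfl⟩
          · exact List.mem_cons_of_mem _ (List.mem_cons_of_mem _ (List.mem_cons_self))
          · exact List.mem_cons_self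
        · exact btrans _ _ (g3e ((mem_swap3 _).2 hM) ((mem_swap3 _).2 h2'')
            (fun h => h1'' ((mem_swap3 _).1 h))) (Or.inr hw3)
      · exact btrans _ _ (g3e ((mem_swap3 _).2 hM) ((mem_swap3 _).2 h2'')
          (fun h => h1'' ((mem_swap3 _).1 h))) (Or.inl hw2)

end T5

section T6

variable {A : Set (Pm n)}

/-- classification of the head `b` against an initial element `a` in the tail -/
theorem classify {b a : Pm n} {t : List (Pm n)} (hA : admissible A)
    (gl : good A (b :: t)) (ha : initial A (b :: t) a) (hat : a ∈ t) :
    (∃ i j k : Fin n, i < j ∧ j < k ∧ Equiv.swap i k ∈ t ∧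
      ((b = Equiv.swap i j ∧ a = Equiv.swap j k) ∨ (b = Equiv.swap j k ∧ a = Equiv.swap i j))) ∨
    (∃ p q c d : Fin n, p < q ∧ c < d ∧ a = Equiv.swap p q ∧ b = Equiv.swap c d ∧
      p ≠ c ∧ p ≠ d ∧ q ≠ c ∧ q ≠ d) := by
  obtain ⟨hnd, hmem, g2R, g2L, g3⟩ := gl
  have hbt : b ∉ t := (List.nodup_cons.1 hnd).1
  have hbl : b ∈ (b :: t) := List.mem_cons_self
  have hal : a ∈ (b :: t) := List.mem_cons_of_mem _ hat
  have hab : a ≠ b := fun he => hbt (he ▸ hat)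
  obtain ⟨i1R, i1L, i2, i3a, i3b⟩ := ha
  obtain ⟨hbA, c', d', hcd, hbeq⟩ :
      b ∈ A ∧ ∃ c d : Fin n, c < d ∧ b = Equiv.swap c d := by
    obtain ⟨h1', h2'⟩ := hmem b hbl
    obtain ⟨c, d, h3', h4'⟩ := h2'
    exact ⟨h1', c, d, h3', h4'⟩
  obtain ⟨haA, p', q', hpq, haeq⟩ :
      a ∈ A ∧ ∃ p q : Fin n, p < q ∧ a = Equiv.swap p q := by
    obtain ⟨h1', h2'⟩ := hmem a hal
    obtain ⟨p, q, h3', h4'⟩ := h2'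
    exact ⟨h1', p, q, h3', h4'⟩
  subst hbeq haeq
  by_cases hqc : q' = c'
  · -- a = swap p q , b = swap q d : triple (p,q,d)
    subst hqc
    have hqd : q' < d' := hcd
    have hmA : Equiv.swap p' d' ∈ A := by
      by_contra hpd
      rcases forced_dichotomy hA hpq hqd haA hbA hpd with ⟨hR, -⟩ | ⟨hL, -⟩
      · obtain ⟨-, hbf⟩ := g2R p' q' d' hpq hqd hpd hR hal hbA
        exact not_before_head hbf
      · exact i1L p' q' d' hpq hqd hpd hL hbl rfl
    have hml : Equiv.swap p' d' ∈ (Equiv.swap q' d' :: t) := by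
      by_contra hml
      exact (g3 p' q' d' hpq hqd hmA).1 hml hal hbl
    have hmt : Equiv.swap p' d' ∈ t := by
      rcases List.mem_cons.1 hml with he | h
      · exact absurd he.symm (sw_ne_mid_r hpq hqd)
      · exact h
    exact Or.inl ⟨p', q', d', hpq, hqd, hmt, Or.inr ⟨rfl, rfl⟩⟩
  · by_cases hdp : d' = p'
    · -- b = swap c p , a = swap p q : triple (c,p,q)
      subst hdp
      have hmA : Equiv.swap c' q' ∈ A := by
        by_contra hcq
        rcases forced_dichotomy hA hcd hpq hbA haA hcq with ⟨hR, -⟩ | ⟨hL, -⟩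
        · exact i1R c' d' q' hcd hpq hcq hR hbl rfl
        · obtain ⟨-, hbf⟩ := g2L c' d' q' hcd hpq hcq hL hal hbA
          exact not_before_head hbf
      have hml : Equiv.swap c' q' ∈ (Equiv.swap c' d' :: t) := by
        by_contra hml
        exact (g3 c' d' q' hcd hpq hmA).1 hml hbl hal
      have hmt : Equiv.swap c' q' ∈ t := by
        rcases List.mem_cons.1 hml with he | h
        · exact absurd he.symm (sw_ne_mid_l hcd hpq)
        · exact h
      exact Or.inl ⟨c', d', q', hcd, hpq, hmt, Or.inl ⟨rfl, rfl⟩⟩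
    · by_cases hpc : p' = c'
      · -- nested, sharing the left endpoint : impossible
        exfalso
        subst hpc
        have hqd : q' ≠ d' := by
          intro he
          exact hab (by rw [he])
        rcases lt_or_gt_of_ne hqd with hlt | hgt
        · -- q < d : b = swap p d is the middle of (p,q,d)
          have hE2A : Equiv.swap q' d' ∈ A := clos_swap hA (le_of_lt hpq) hlt (le_refl _) hbA
          by_cases hE2l : Equiv.swap q' d' ∈ (Equiv.swap p' d' :: t)
          · rcases (g3 p' q' d' hpq hlt hbA).2.2.1 hbl hal hE2l with ⟨hbf, -⟩ | ⟨hbf, -⟩ <;>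
              exact not_before_head hbf
          · exact i3a p' q' d' hpq hlt hbl rfl hE2l
        · -- d < q : a = swap p q is the middle of (p,d,q)
          have hE2A : Equiv.swap d' q' ∈ A := clos_swap hA (le_of_lt hcd) hgt (le_refl _) haA
          by_cases hE2l : Equiv.swap d' q' ∈ (Equiv.swap p' d' :: t)
          · exact i2 p' d' q' hcd hgt rfl hbl hE2l
          · exact not_before_head
              ((g3 p' d' q' hcd hgt haA).2.2.2.1 hal hbl hE2l)
      · by_cases hqd : q' = d'
        · -- nested, sharing the right endpoint : impossible
          exfalso
          subst hqd
          rcases lt_or_gt_of_ne hpc with hlt | hgt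
          · -- p < c : a = swap p q is the middle of (p,c,q)
            have hE1A : Equiv.swap p' c' ∈ A := clos_swap hA (le_refl _) hlt (le_of_lt hcd) haA
            by_cases hE1l : Equiv.swap p' c' ∈ (Equiv.swap c' q' :: t)
            · exact i2 p' c' q' hlt hcd rfl hE1l hbl
            · exact not_before_head
                ((g3 p' c' q' hlt hcd haA).2.2.2.2 hal hbl hE1l)
          · -- c < p : b = swap c q is the middle of (c,p,q)
            have hE1A : Equiv.swap c' p' ∈ A := clos_swap hA (le_refl _) hgt (le_of_lt hpq) hbA
            by_cases hE1l : Equiv.swap c' p' ∈ (Equiv.swap c' q' :: t)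
            · rcases (g3 c' p' q' hgt hpq hbA).2.2.1 hbl hE1l hal with ⟨hbf, -⟩ | ⟨hbf, -⟩
              · exact not_before_head hbf
              · exact not_before_head hbf
            · exact i3b c' p' q' hgt hpq hbl rfl hE1l
        · exact Or.inr ⟨p', q', c', d', hpq, hcd, rfl, rfl, hpc, fun h => hdp h.symm, hqc, hqd⟩

end T6

section T7

variable {A : Set (Pm n)}

/-- the middle `swap i k` of the obstructing triple is initial in the tail -/
theorem mid_initial {b a : Pm n} {t : List (Pm n)} {i j k : Fin n}
    (hA : admissible A) (h1 : i < j) (h2 : j < k)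
    (gl : good A (b :: t)) (ha : initial A (b :: t) a) (hat : a ∈ t)
    (hcase : (b = Equiv.swap i j ∧ a = Equiv.swap j k) ∨
             (b = Equiv.swap j k ∧ a = Equiv.swap i j))
    (hmt : Equiv.swap i k ∈ t) :
    initial A t (Equiv.swap i k) := by
  have h3 : i < k := h1.trans h2
  obtain ⟨hnd, hmem, g2R, g2L, g3⟩ := gl
  have hbt : b ∉ t := (List.nodup_cons.1 hnd).1
  have hbl : b ∈ (b :: t) := List.mem_cons_self
  have hal : a ∈ (b :: t) := List.mem_cons_of_mem _ hat
  obtain ⟨i1R, i1L, i2, i3a, i3b⟩ := ha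
  have hijl : Equiv.swap i j ∈ (b :: t) := by
    rcases hcase with ⟨hb', ha'⟩ | ⟨hb', ha'⟩
    · exact hb' ▸ hbl
    · exact ha' ▸ hal
  have hjkl : Equiv.swap j k ∈ (b :: t) := by
    rcases hcase with ⟨hb', ha'⟩ | ⟨hb', ha'⟩
    · exact ha' ▸ hal
    · exact hb' ▸ hbl
  have hijA : Equiv.swap i j ∈ A := (hmem _ hijl).1
  have hjkA : Equiv.swap j k ∈ A := (hmem _ hjkl).1
  have hikA : Equiv.swap i k ∈ A := (hmem _ (List.mem_cons_of_mem _ hmt)).1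
  refine ⟨?_, ?_, ?_, ?_, ?_⟩
  · -- I1R
    intro h' j' k' o1 o2 hik' hR' hijt' heq
    obtain ⟨e1, e2⟩ := swap_eq_iff h3 o2 heq
    subst e1
    subst e2
    -- now h' < i, swap h' i ∈ t, Rc h' i k ∈ A, swap h' k ∉ A
    by_cases hhj : Equiv.swap h' j ∈ A
    · by_cases hLhjk : Lc h' j k ∈ A
      · exact hik' (hA.2.2.1 h' i j k o1 (h1.trans h2) (o1.trans h1) h2 hR' hLhjk)
      · rcases forced_dichotomy hA (o1.trans h1) h2 hhj hjkA hik' with ⟨hRhjk, -⟩ | ⟨hL', -⟩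
        swap
        · exact hLhjk hL'
        · by_cases hhjt : Equiv.swap h' j ∈ t
          · rcases hcase with ⟨hb', ha'⟩ | ⟨hb', ha'⟩
            · -- a = swap j k
              exact i1R h' j k (o1.trans h1) h2 hik' hRhjk
                (List.mem_cons_of_mem _ hhjt) ha'
            · -- b = swap j k
              obtain ⟨-, hbf⟩ := g2R h' j k (o1.trans h1) h2 hik' hRhjk
                (List.mem_cons_of_mem _ hhjt) hjkA
              rw [← hb'] at hbf
              exact not_before_head hbf
          · -- swap h' j ∉ t ; it cannot be b, so it is absent
            have hhjl : Equiv.swap h' j ∉ (b :: t) := by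
              intro hc
              rcases List.mem_cons.1 hc with he | he
              · rcases hcase with ⟨hb', -⟩ | ⟨hb', -⟩
                · obtain ⟨e3, -⟩ := swap_eq_iff (o1.trans h1) h1 (he.trans hb')
                  exact absurd e3 (ne_of_lt o1)
                · obtain ⟨-, e4⟩ := swap_eq_iff (o1.trans h1) h2 (he.trans hb')
                  exact absurd e4 (ne_of_lt h2)
              · exact hhjt he
            exact (g3 h' i j o1 h1 hhj).1 hhjl (List.mem_cons_of_mem _ hijt') hijl
    · -- swap h' j ∉ A
      have hRhij : Rc h' i j ∈ A := clos_Rc hA o1 h1 h2 hR'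
      rcases hcase with ⟨hb', ha'⟩ | ⟨hb', ha'⟩
      · -- b = swap i j
        obtain ⟨-, hbf⟩ := g2R h' i j o1 h1 hhj hRhij (List.mem_cons_of_mem _ hijt') hijA
        rw [← hb'] at hbf
        exact not_before_head hbf
      · -- a = swap i j
        exact i1R h' i j o1 h1 hhj hRhij (List.mem_cons_of_mem _ hijt') ha'
  · -- I1L
    intro i' j' q o1 o2 hik' hL' hjqt' heq
    obtain ⟨e1, e2⟩ := swap_eq_iff h3 o1 heq
    subst e1
    subst e2
    -- now k < q, swap k q ∈ t, Lc i k q ∈ A, swap i q ∉ A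
    by_cases hjq : Equiv.swap j q ∈ A
    · by_cases hRijq : Rc i j q ∈ A
      · exact hik' (hA.2.2.1 i j k q h1 (h2.trans o2) h3 o2 hRijq hL')
      · rcases forced_dichotomy hA h1 (h2.trans o2) hijA hjq hik' with ⟨hR', -⟩ | ⟨hLijq, -⟩
        · exact hRijq hR'
        · by_cases hjqt : Equiv.swap j q ∈ t
          · rcases hcase with ⟨hb', ha'⟩ | ⟨hb', ha'⟩
            · -- b = swap i j
              obtain ⟨-, hbf⟩ := g2L i j q h1 (h2.trans o2) hik' hLijq
                (List.mem_cons_of_mem _ hjqt) hijA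
              rw [← hb'] at hbf
              exact not_before_head hbf
            · -- a = swap i j
              exact i1L i j q h1 (h2.trans o2) hik' hLijq (List.mem_cons_of_mem _ hjqt) ha'
          · have hjql : Equiv.swap j q ∉ (b :: t) := by
              intro hc
              rcases List.mem_cons.1 hc with he | he
              · rcases hcase with ⟨hb', -⟩ | ⟨hb', -⟩
                · obtain ⟨e3, -⟩ := swap_eq_iff (h2.trans o2) h1 (he.trans hb')
                  exact absurd e3.symm (ne_of_lt h1)
                · obtain ⟨-, e4⟩ := swap_eq_iff (h2.trans o2) h2 (he.trans hb')
                  exact absurd e4.symm (ne_of_lt o2)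
              · exact hjqt he
            exact (g3 j k q h2 o2 hjq).1 hjql hjkl (List.mem_cons_of_mem _ hjqt')
    · -- swap j q ∉ A
      have hLjkq : Lc j k q ∈ A := clos_Lc hA h1 h2 o2 hL'
      rcases hcase with ⟨hb', ha'⟩ | ⟨hb', ha'⟩
      · -- a = swap j k
        exact i1L j k q h2 o2 hjq hLjkq (List.mem_cons_of_mem _ hjqt') ha'
      · -- b = swap j k
        obtain ⟨-, hbf⟩ := g2L j k q h2 o2 hjq hLjkq (List.mem_cons_of_mem _ hjqt') hjkA
        rw [← hb'] at hbf
        exact not_before_head hbf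
  · -- I2
    intro i' q k' o1 o2 heq hE1t hE2t
    obtain ⟨e1, e2⟩ := swap_eq_iff h3 (o1.trans o2) heq
    subst e1
    subst e2
    -- i < q < k, swap i q ∈ t, swap q k ∈ t
    by_cases hqj : q = j
    · subst hqj
      rcases hcase with ⟨hb', -⟩ | ⟨hb', -⟩
      · exact hbt (hb' ▸ hE1t)
      · exact hbt (hb' ▸ hE2t)
    · have hiqA : Equiv.swap i q ∈ A := (hmem _ (List.mem_cons_of_mem _ hE1t)).1
      have hqkA : Equiv.swap q k ∈ A := (hmem _ (List.mem_cons_of_mem _ hE2t)).1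
      rcases lt_or_gt_of_ne hqj with hlt | hgt
      · -- q < j
        have hqjA : Equiv.swap q j ∈ A := clos_swap hA (le_of_lt o1) hlt (le_of_lt h2) hikA
        rcases hcase with ⟨hb', ha'⟩ | ⟨hb', ha'⟩
        · -- b = swap i j, a = swap j k
          by_cases hqjt : Equiv.swap q j ∈ t
          · rcases (g3 i q j o1 hlt hijA).2.2.1 hijl (List.mem_cons_of_mem _ hE1t)
              (List.mem_cons_of_mem _ hqjt) with ⟨hbf, -⟩ | ⟨hbf, -⟩ <;>
            · rw [← hb'] at hbf
              exact not_before_head hbf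
          · have hqjl : Equiv.swap q j ∉ (b :: t) := by
              intro hc
              rcases List.mem_cons.1 hc with he | he
              · obtain ⟨e3, -⟩ := swap_eq_iff hlt h1 (he.trans hb')
                exact absurd e3 (ne_of_lt o1).symm
              · exact hqjt he
            exact i3b q j k hlt h2 (List.mem_cons_of_mem _ hE2t) ha' hqjl
        · -- b = swap j k, a = swap i j
          by_cases hqjt : Equiv.swap q j ∈ t
          · exact i2 i q j o1 hlt ha' (List.mem_cons_of_mem _ hE1t)
              (List.mem_cons_of_mem _ hqjt)
          · have hqjl : Equiv.swap q j ∉ (b :: t) := by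
              intro hc
              rcases List.mem_cons.1 hc with he | he
              · obtain ⟨e3, -⟩ := swap_eq_iff hlt h2 (he.trans hb')
                exact absurd e3 (ne_of_lt hlt)
              · exact hqjt he
            have hbf := (g3 q j k hlt h2 hqkA).2.2.2.2 (List.mem_cons_of_mem _ hE2t) hjkl hqjl
            rw [← hb'] at hbf
            exact not_before_head hbf
      · -- j < q
        rcases hcase with ⟨hb', ha'⟩ | ⟨hb', ha'⟩
        · -- b = swap i j, a = swap j k
          by_cases hjqt : Equiv.swap j q ∈ t
          · exact i2 j q k hgt o2 ha' (List.mem_cons_of_mem _ hjqt)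
              (List.mem_cons_of_mem _ hE2t)
          · have hjql : Equiv.swap j q ∉ (b :: t) := by
              intro hc
              rcases List.mem_cons.1 hc with he | he
              · obtain ⟨e3, -⟩ := swap_eq_iff hgt h1 (he.trans hb')
                exact absurd e3.symm (ne_of_lt h1)
              · exact hjqt he
            have hbf := (g3 i j q h1 hgt hiqA).2.2.2.1 (List.mem_cons_of_mem _ hE1t) hijl hjql
            rw [← hb'] at hbf
            exact not_before_head hbf
        · -- b = swap j k, a = swap i j
          by_cases hjqt : Equiv.swap j q ∈ t
          · rcases (g3 j q k hgt o2 hjkA).2.2.1 hjkl (List.mem_cons_of_mem _ hjqt)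
              (List.mem_cons_of_mem _ hE2t) with ⟨hbf, -⟩ | ⟨hbf, -⟩ <;>
            · rw [← hb'] at hbf
              exact not_before_head hbf
          · have hjql : Equiv.swap j q ∉ (b :: t) := by
              intro hc
              rcases List.mem_cons.1 hc with he | he
              · obtain ⟨-, e4⟩ := swap_eq_iff hgt h2 (he.trans hb')
                exact absurd e4 (ne_of_lt o2)
              · exact hjqt he
            exact i3a i j q h1 hgt (List.mem_cons_of_mem _ hE1t) ha' hjql
  · -- I3a
    intro i' j' s o1 o2 hist' heq hnE2
    obtain ⟨e1, e2⟩ := swap_eq_iff h3 o1 heq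
    subst e1
    subst e2
    -- k < s, swap i s ∈ t, swap k s ∉ t
    have hisA : Equiv.swap i s ∈ A := (hmem _ (List.mem_cons_of_mem _ hist')).1
    have hksl : Equiv.swap k s ∉ (b :: t) := by
      intro hc
      rcases List.mem_cons.1 hc with he | he
      · rcases hcase with ⟨hb', -⟩ | ⟨hb', -⟩
        · obtain ⟨e3, -⟩ := swap_eq_iff o2 h1 (he.trans hb')
          exact absurd e3.symm (ne_of_lt h3)
        · obtain ⟨e3, -⟩ := swap_eq_iff o2 h2 (he.trans hb')
          exact absurd e3.symm (ne_of_lt h2)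
      · exact hnE2 he
    have hjsA : Equiv.swap j s ∈ A :=
      clos_swap hA (le_of_lt h1) (h2.trans o2) (le_refl _) hisA
    by_cases hjst : Equiv.swap j s ∈ t
    · rcases hcase with ⟨hb', ha'⟩ | ⟨hb', ha'⟩
      · -- a = swap j k
        exact i3a j k s h2 o2 (List.mem_cons_of_mem _ hjst) ha' hksl
      · -- b = swap j k
        have hbf := (g3 j k s h2 o2 hjsA).2.2.2.1 (List.mem_cons_of_mem _ hjst) hjkl hksl
        rw [← hb'] at hbf
        exact not_before_head hbf
    · have hjsl : Equiv.swap j s ∉ (b :: t) := by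
        intro hc
        rcases List.mem_cons.1 hc with he | he
        · rcases hcase with ⟨hb', -⟩ | ⟨hb', -⟩
          · obtain ⟨e3, -⟩ := swap_eq_iff (h2.trans o2) h1 (he.trans hb')
            exact absurd e3.symm (ne_of_lt h1)
          · obtain ⟨-, e4⟩ := swap_eq_iff (h2.trans o2) h2 (he.trans hb')
            exact absurd e4.symm (ne_of_lt o2)
        · exact hjst he
      rcases hcase with ⟨hb', ha'⟩ | ⟨hb', ha'⟩
      · -- b = swap i j
        have hbf := (g3 i j s h1 (h2.trans o2) hisA).2.2.2.1
          (List.mem_cons_of_mem _ hist') hijl hjsl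
        rw [← hb'] at hbf
        exact not_before_head hbf
      · -- a = swap i j
        exact i3a i j s h1 (h2.trans o2) (List.mem_cons_of_mem _ hist') ha' hjsl
  · -- I3b
    intro h' j' k' o1 o2 hhkt' heq hnE1
    obtain ⟨e1, e2⟩ := swap_eq_iff h3 o2 heq
    subst e1
    subst e2
    -- h' < i, swap h' k ∈ t, swap h' i ∉ t
    have hhkA : Equiv.swap h' k ∈ A := (hmem _ (List.mem_cons_of_mem _ hhkt')).1
    have hhil : Equiv.swap h' i ∉ (b :: t) := by
      intro hc
      rcases List.mem_cons.1 hc with he | he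
      · rcases hcase with ⟨hb', -⟩ | ⟨hb', -⟩
        · obtain ⟨e3, -⟩ := swap_eq_iff o1 h1 (he.trans hb')
          exact absurd e3 (ne_of_lt o1)
        · obtain ⟨e3, -⟩ := swap_eq_iff o1 h2 (he.trans hb')
          exact absurd e3 (ne_of_lt (o1.trans h1))
      · exact hnE1 he
    have hhjA : Equiv.swap h' j ∈ A :=
      clos_swap hA (le_refl _) (o1.trans h1) (le_of_lt h2) hhkA
    by_cases hhjt : Equiv.swap h' j ∈ t
    · rcases hcase with ⟨hb', ha'⟩ | ⟨hb', ha'⟩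
      · -- b = swap i j
        have hbf := (g3 h' i j o1 h1 hhjA).2.2.2.2 (List.mem_cons_of_mem _ hhjt) hijl hhil
        rw [← hb'] at hbf
        exact not_before_head hbf
      · -- a = swap i j
        exact i3b h' i j o1 h1 (List.mem_cons_of_mem _ hhjt) ha' hhil
    · have hhjl : Equiv.swap h' j ∉ (b :: t) := by
        intro hc
        rcases List.mem_cons.1 hc with he | he
        · rcases hcase with ⟨hb', -⟩ | ⟨hb', -⟩
          · obtain ⟨e3, -⟩ := swap_eq_iff (o1.trans h1) h1 (he.trans hb')
            exact absurd e3 (ne_of_lt o1)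
          · obtain ⟨e3, -⟩ := swap_eq_iff (o1.trans h1) h2 (he.trans hb')
            exact absurd e3 (ne_of_lt (o1.trans h1))
        · exact hhjt he
      rcases hcase with ⟨hb', ha'⟩ | ⟨hb', ha'⟩
      · -- a = swap j k
        exact i3b h' j k (o1.trans h1) h2 (List.mem_cons_of_mem _ hhkt') ha' hhjl
      · -- b = swap j k
        have hbf := (g3 h' j k (o1.trans h1) h2 hhkA).2.2.2.2
          (List.mem_cons_of_mem _ hhkt') hjkl hhjl
        rw [← hb'] at hbf
        exact not_before_head hbf

end T7

section T8

variable {A : Set (Pm n)}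

theorem initial_transfer {l1 l2 : List (Pm n)} {a : Pm n}
    (hme : ∀ z : Pm n, z ∈ l1 ↔ z ∈ l2) (h : initial A l2 a) : initial A l1 a := by
  obtain ⟨i1R, i1L, i2, i3a, i3b⟩ := h
  refine ⟨fun i j k o1 o2 u1 u2 u3 => i1R i j k o1 o2 u1 u2 ((hme _).1 u3),
    fun i j k o1 o2 u1 u2 u3 => i1L i j k o1 o2 u1 u2 ((hme _).1 u3),
    fun i j k o1 o2 u1 u2 u3 => i2 i j k o1 o2 u1 ((hme _).1 u2) ((hme _).1 u3),
    fun i j k o1 o2 u1 u2 u3 => i3a i j k o1 o2 ((hme _).1 u1) u2 (fun h => u3 ((hme _).2 h)),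
    fun i j k o1 o2 u1 u2 u3 => i3b i j k o1 o2 ((hme _).1 u1) u2 (fun h => u3 ((hme _).2 h))⟩

theorem initial_strip {p q c d : Fin n} (hpq : p < q) (hcd : c < d)
    (d1 : p ≠ c) (d2 : p ≠ d) (d3 : q ≠ c) (d4 : q ≠ d) {t : List (Pm n)}
    (h : initial A (Equiv.swap c d :: t) (Equiv.swap p q)) :
    initial A t (Equiv.swap p q) := by
  obtain ⟨i1R, i1L, i2, i3a, i3b⟩ := h
  refine ⟨fun i j k o1 o2 u1 u2 u3 => i1R i j k o1 o2 u1 u2 (List.mem_cons_of_mem _ u3),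
    fun i j k o1 o2 u1 u2 u3 => i1L i j k o1 o2 u1 u2 (List.mem_cons_of_mem _ u3),
    fun i j k o1 o2 u1 u2 u3 => i2 i j k o1 o2 u1 (List.mem_cons_of_mem _ u2)
      (List.mem_cons_of_mem _ u3), ?_, ?_⟩
  · intro i j k o1 o2 u1 u2 u3
    refine i3a i j k o1 o2 (List.mem_cons_of_mem _ u1) u2 ?_
    intro hc
    rcases List.mem_cons.1 hc with he | he
    · -- swap j k = swap c d, with swap i j = swap p q : share j
      obtain ⟨e1, e2⟩ := swap_eq_iff o2 hcd he
      obtain ⟨e3, e4⟩ := swap_eq_iff o1 hpq u2.symm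
      exact d3 (e4.symm.trans e1)
    · exact u3 he
  · intro i j k o1 o2 u1 u2 u3
    refine i3b i j k o1 o2 (List.mem_cons_of_mem _ u1) u2 ?_
    intro hc
    rcases List.mem_cons.1 hc with he | he
    · obtain ⟨e1, e2⟩ := swap_eq_iff o1 hcd he
      obtain ⟨e3, e4⟩ := swap_eq_iff o2 hpq u2.symm
      exact d2 (e3.symm.trans e2)
    · exact u3 he

theorem initial_push {b a : Pm n} {t u : List (Pm n)} {i j k : Fin n}
    (h1 : i < j) (h2 : j < k)
    (hcase : (b = Equiv.swap i j ∧ a = Equiv.swap j k) ∨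
             (b = Equiv.swap j k ∧ a = Equiv.swap i j))
    (ha : initial A (b :: t) a)
    (hmeu : ∀ z : Pm n, z ∈ (Equiv.swap i k :: u) ↔ z ∈ t)
    (hmu : Equiv.swap i k ∉ u) :
    initial A u a := by
  have h3 : i < k := h1.trans h2
  obtain ⟨i1R, i1L, i2, i3a, i3b⟩ := ha
  have memlift : ∀ z : Pm n, z ∈ u → z ∈ (b :: t) := fun z hz =>
    List.mem_cons_of_mem _ ((hmeu z).1 (List.mem_cons_of_mem _ hz))
  have absent : ∀ z : Pm n, z ∉ u → z ≠ Equiv.swap i k → z ≠ b → z ∉ (b :: t) := by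
    intro z hz hzm hzb hc
    rcases List.mem_cons.1 hc with he | he
    · exact hzb he
    · rcases List.mem_cons.1 ((hmeu z).2 he) with he' | he'
      · exact hzm he'
      · exact hz he'
  refine ⟨fun i' j' k' o1 o2 u1 u2 u3 => i1R i' j' k' o1 o2 u1 u2 (memlift _ u3),
    fun i' j' k' o1 o2 u1 u2 u3 => i1L i' j' k' o1 o2 u1 u2 (memlift _ u3),
    fun i' j' k' o1 o2 u1 u2 u3 => i2 i' j' k' o1 o2 u1 (memlift _ u2) (memlift _ u3),
    ?_, ?_⟩
  · intro i' j' k' o1 o2 u1 u2 u3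
    by_cases hm : Equiv.swap j' k' = Equiv.swap i k
    · -- a = swap i' j' with swap j' k' = swap i k
      obtain ⟨e1, e2⟩ := swap_eq_iff o2 h3 hm
      rcases hcase with ⟨-, ha'⟩ | ⟨-, ha'⟩
      · -- a = swap j k = swap i' j'
        obtain ⟨f1, f2⟩ := swap_eq_iff o1 h2 (u2.symm.trans ha')
        exfalso
        simp only [Fin.ext_iff, Fin.lt_def] at f1 f2 e1 e2 h1 h2 o1 o2
        omega
      · -- a = swap i j = swap i' j'
        obtain ⟨f1, f2⟩ := swap_eq_iff o1 h1 (u2.symm.trans ha')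
        exfalso
        simp only [Fin.ext_iff, Fin.lt_def] at f1 f2 e1 e2 h1 h2 o1 o2
        omega
    · by_cases hb : Equiv.swap j' k' = b
      · rcases hcase with ⟨hb', ha'⟩ | ⟨hb', ha'⟩
        · -- b = swap i j : swap j' k' = swap i j, a = swap j k = swap i' j'
          obtain ⟨e1, e2⟩ := swap_eq_iff o2 h1 (hb.trans hb')
          obtain ⟨f1, f2⟩ := swap_eq_iff o1 h2 (u2.symm.trans ha')
          exfalso
          simp only [Fin.ext_iff, Fin.lt_def] at e1 e2 f1 f2 h1 h2 o1 o2
          omega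
        · -- b = swap j k : swap j' k' = swap j k, a = swap i j = swap i' j'
          obtain ⟨e1, e2⟩ := swap_eq_iff o2 h2 (hb.trans hb')
          obtain ⟨f1, f2⟩ := swap_eq_iff o1 h1 (u2.symm.trans ha')
          -- then (i',j',k') = (i,j,k) and swap i' k' = swap i k ∈ u : contradiction
          apply hmu
          have : Equiv.swap i' k' = Equiv.swap i k := by
            rw [f1, e2]
          exact this ▸ u1
      · exact i3a i' j' k' o1 o2 (memlift _ u1) u2 (absent _ u3 hm hb)
  · intro i' j' k' o1 o2 u1 u2 u3
    by_cases hm : Equiv.swap i' j' = Equiv.swap i k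
    · obtain ⟨e1, e2⟩ := swap_eq_iff o1 h3 hm
      rcases hcase with ⟨-, ha'⟩ | ⟨-, ha'⟩
      · obtain ⟨f1, f2⟩ := swap_eq_iff o2 h2 (u2.symm.trans ha')
        exfalso
        simp only [Fin.ext_iff, Fin.lt_def] at e1 e2 f1 f2 h1 h2 o1 o2
        omega
      · obtain ⟨f1, f2⟩ := swap_eq_iff o2 h1 (u2.symm.trans ha')
        exfalso
        simp only [Fin.ext_iff, Fin.lt_def] at e1 e2 f1 f2 h1 h2 o1 o2
        omega
    · by_cases hb : Equiv.swap i' j' = b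
      · rcases hcase with ⟨hb', ha'⟩ | ⟨hb', ha'⟩
        · -- b = swap i j = swap i' j', a = swap j k = swap j' k'
          obtain ⟨e1, e2⟩ := swap_eq_iff o1 h1 (hb.trans hb')
          obtain ⟨f1, f2⟩ := swap_eq_iff o2 h2 (u2.symm.trans ha')
          apply hmu
          have : Equiv.swap i' k' = Equiv.swap i k := by
            rw [e1, f2]
          exact this ▸ u1
        · -- b = swap j k = swap i' j', a = swap i j = swap j' k'
          obtain ⟨e1, e2⟩ := swap_eq_iff o1 h2 (hb.trans hb')
          obtain ⟨f1, f2⟩ := swap_eq_iff o2 h1 (u2.symm.trans ha')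
          exfalso
          simp only [Fin.ext_iff, Fin.lt_def] at e1 e2 f1 f2 h1 h2 o1 o2
          omega
      · exact i3b i' j' k' o1 o2 (memlift _ u1) u2 (absent _ u3 hm hb)

theorem length_eq_of_mem_iff {l l' : List (Pm n)} (h1 : l.Nodup) (h2 : l'.Nodup)
    (hme : ∀ z : Pm n, z ∈ l ↔ z ∈ l') : l.length = l'.length := by
  rw [← List.toFinset_card_of_nodup h1, ← List.toFinset_card_of_nodup h2]
  congr 1
  ext z
  simp [hme z]

end T8

section Ext

variable {A : Set (Pm n)}

/-- head extraction: an initial element can be brought to the front of a good list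
preserving the product. -/
theorem ext_lemma (hA : admissible A) :
    ∀ N : ℕ, ∀ l : List (Pm n), l.length ≤ N → good A l →
      ∀ a, a ∈ l → initial A l a →
      ∃ v, good A (a :: v) ∧ (∀ z : Pm n, z ∈ (a :: v) ↔ z ∈ l) ∧ (a :: v).prod = l.prod := by
  intro N
  induction N with
  | zero =>
    intro l hlen gl a hal ha
    rw [Nat.le_zero] at hlen
    rw [List.eq_nil_of_length_eq_zero hlen] at hal
    exact absurd hal (List.not_mem_nil)
  | succ N ih =>
    intro l hlen gl a hal ha
    cases l with
    | nil => exact absurd hal (List.not_mem_nil)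
    | cons b t =>
      by_cases hba : b = a
      · subst hba
        exact ⟨t, gl, fun z => Iff.rfl, rfl⟩
      · have hat : a ∈ t := by
          rcases List.mem_cons.1 hal with he | he
          · exact absurd he.symm hba
          · exact he
        have gt := good_tail gl
        have hlent : t.length ≤ N := by
          simp only [List.length_cons] at hlen
          omega
        rcases classify hA gl ha hat with
          ⟨i, j, k, h1, h2, hmt, hcase⟩ |
          ⟨p, q, c, d, hpq, hcd, haeq, hbeq, d1, d2, d3, d4⟩
        · -- obstruction case : braid
          have hminit := mid_initial hA h1 h2 gl ha hat hcase hmt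
          obtain ⟨u, gmu, hmeu, hpu⟩ := ih t hlent gt (Equiv.swap i k) hmt hminit
          have gu := good_tail gmu
          have hmu : Equiv.swap i k ∉ u := (List.nodup_cons.1 gmu.1).1
          have ham : a ≠ Equiv.swap i k := by
            rcases hcase with ⟨-, ha'⟩ | ⟨-, ha'⟩
            · exact ha' ▸ sw_ne_mid_r h1 h2
            · exact ha' ▸ sw_ne_mid_l h1 h2
          have hau : a ∈ u := by
            rcases List.mem_cons.1 ((hmeu a).2 hat) with he | he
            · exact absurd he ham
            · exact he
          have hainit_u : initial A u a := initial_push h1 h2 hcase ha hmeu hmu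
          have hlenu : u.length ≤ N := by
            have heq := length_eq_of_mem_iff gmu.1 gt.1 hmeu
            simp only [List.length_cons] at heq
            omega
          obtain ⟨v, gav, hmev, hpv⟩ := ih u hlenu gu a hau hainit_u
          have gmav : good A (Equiv.swap i k :: a :: v) := good_prepend gmu gav hmev
          have hmeX : ∀ z : Pm n, z ∈ (Equiv.swap i k :: a :: v) ↔ z ∈ t := by
            intro z
            calc z ∈ (Equiv.swap i k :: a :: v) ↔
                z = Equiv.swap i k ∨ z ∈ (a :: v) := List.mem_cons
              _ ↔ z = Equiv.swap i k ∨ z ∈ u := or_congr Iff.rfl (hmev z)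
              _ ↔ z ∈ (Equiv.swap i k :: u) := List.mem_cons.symm
              _ ↔ z ∈ t := hmeu z
          have gbmav : good A (b :: Equiv.swap i k :: a :: v) := good_prepend gl gmav hmeX
          have gfinal : good A (a :: Equiv.swap i k :: b :: v) := good_braid h1 h2 hcase gbmav
          refine ⟨Equiv.swap i k :: b :: v, gfinal, ?_, ?_⟩
          · intro z
            calc z ∈ (a :: Equiv.swap i k :: b :: v) ↔
                z ∈ (b :: Equiv.swap i k :: a :: v) := (mem_swap3 z).symm
              _ ↔ z = b ∨ z ∈ (Equiv.swap i k :: a :: v) := List.mem_cons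
              _ ↔ z = b ∨ z ∈ t := or_congr Iff.rfl (hmeX z)
              _ ↔ z ∈ (b :: t) := List.mem_cons.symm
          · have hbraid : a * Equiv.swap i k * b = b * Equiv.swap i k * a := by
              rcases hcase with ⟨hb', ha'⟩ | ⟨hb', ha'⟩
              · rw [hb', ha']
                exact (swap_braid (ne_of_lt h1) (ne_of_lt (h1.trans h2)) (ne_of_lt h2)).symm
              · rw [hb', ha']
                exact swap_braid (ne_of_lt h1) (ne_of_lt (h1.trans h2)) (ne_of_lt h2)
            simp only [List.prod_cons]
            rw [← hpu, List.prod_cons, ← hpv, List.prod_cons]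
            simp only [← mul_assoc]
            rw [hbraid]
        · -- commuting case
          subst haeq
          subst hbeq
          have hainit_t : initial A t (Equiv.swap p q) :=
            initial_strip hpq hcd d1 d2 d3 d4 ha
          obtain ⟨v, gav, hmev, hpv⟩ := ih t hlent gt _ hat hainit_t
          have gbav : good A (Equiv.swap c d :: Equiv.swap p q :: v) := good_prepend gl gav hmev
          have gfinal := good_headswap hpq hcd d1 d2 d3 d4 gbav
          refine ⟨Equiv.swap c d :: v, gfinal, ?_, ?_⟩
          · intro z
            calc z ∈ (Equiv.swap p q :: Equiv.swap c d :: v) ↔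
                z ∈ (Equiv.swap c d :: Equiv.swap p q :: v) := (mem_swap2 z).symm
              _ ↔ z = Equiv.swap c d ∨ z ∈ (Equiv.swap p q :: v) := List.mem_cons
              _ ↔ z = Equiv.swap c d ∨ z ∈ t := or_congr Iff.rfl (hmev z)
              _ ↔ z ∈ (Equiv.swap c d :: t) := List.mem_cons.symm
          · have hcomm : Equiv.swap p q * Equiv.swap c d = Equiv.swap c d * Equiv.swap p q :=
              swap_disjoint_comm d1 d2 d3 d4
            simp only [List.prod_cons]
            rw [← hpv, List.prod_cons]
            simp only [← mul_assoc]
            rw [hcomm]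

end Ext

section Main

variable {A : Set (Pm n)}

theorem prods_eq (hA : admissible A) :
    ∀ N : ℕ, ∀ l1 l2 : List (Pm n), l1.length ≤ N → good A l1 → good A l2 →
      (∀ z : Pm n, z ∈ l1 ↔ z ∈ l2) → l1.prod = l2.prod := by
  intro N
  induction N with
  | zero =>
    intro l1 l2 hlen g1 g2 hme
    rw [Nat.le_zero] at hlen
    have h1 : l1 = [] := List.eq_nil_of_length_eq_zero hlen
    have h2 : l2 = [] := by
      rw [List.eq_nil_iff_forall_not_mem]
      intro z hz
      have := (hme z).2 hz
      rw [h1] at this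
      exact List.not_mem_nil this
    rw [h1, h2]
  | succ N ih =>
    intro l1 l2 hlen g1 g2 hme
    cases l2 with
    | nil =>
      have h1 : l1 = [] := by
        rw [List.eq_nil_iff_forall_not_mem]
        intro z hz
        exact List.not_mem_nil ((hme z).1 hz)
      rw [h1]
    | cons a t2 =>
      have hal1 : a ∈ l1 := (hme a).2 (List.mem_cons_self)
      have hinit : initial A l1 a := initial_transfer hme (initial_head g2)
      obtain ⟨v, gav, hmev, hpv⟩ := ext_lemma hA (N + 1) l1 hlen g1 a hal1 hinit
      have gv := good_tail gav
      have gt2 := good_tail g2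
      have hav : a ∉ v := (List.nodup_cons.1 gav.1).1
      have hat2 : a ∉ t2 := (List.nodup_cons.1 g2.1).1
      have hmevt : ∀ z : Pm n, z ∈ v ↔ z ∈ t2 := by
        intro z
        constructor
        · intro hz
          have hza : z ≠ a := fun he => hav (he ▸ hz)
          have : z ∈ (a :: t2) := (hme z).1 ((hmev z).1 (List.mem_cons_of_mem _ hz))
          rcases List.mem_cons.1 this with he | he
          · exact absurd he hza
          · exact he
        · intro hz
          have hza : z ≠ a := fun he => hat2 (he ▸ hz)
          have : z ∈ (a :: v) := (hmev z).2 ((hme z).2 (List.mem_cons_of_mem _ hz))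
          rcases List.mem_cons.1 this with he | he
          · exact absurd he hza
          · exact he
      have hlenv : v.length ≤ N := by
        have heq := length_eq_of_mem_iff gav.1 g1.1 hmev
        simp only [List.length_cons] at heq
        omega
      have hind := ih v t2 hlenv gv gt2 hmevt
      rw [← hpv, List.prod_cons, List.prod_cons, hind]

end Main

section Top

variable {A : Set (Pm n)}

theorem before_of_rel {r : Pm n → Pm n → Prop} {l : List (Pm n)}
    (hnd : l.Nodup)
    (hst : strictTotalOn {τ : Pm n | τ ∈ A ∧ isTransposition τ} r)
    (hm : ∀ x : Pm n, x ∈ l ↔ (x ∈ A ∧ isTransposition x))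
    (hs : List.Pairwise r l) {x y : Pm n} (hx : x ∈ l) (hy : y ∈ l) (hne : x ≠ y)
    (hr : r x y) : before l x y := by
  rcases before_total hx hy hne with h | h
  · exact h
  · exfalso
    have hryx : r y x := sorted_rel_of_before hs h
    have hxS : x ∈ {τ : Pm n | τ ∈ A ∧ isTransposition τ} := (hm x).1 hx
    have hyS : y ∈ {τ : Pm n | τ ∈ A ∧ isTransposition τ} := (hm y).1 hy
    exact hst.1 x hxS (hst.2.1 x hxS y hyS x hxS hr hryx)

theorem good_of_sorted {r : Pm n → Pm n → Prop} {l : List (Pm n)}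
    (hA : admissible A)
    (hnd : l.Nodup)
    (hst : strictTotalOn {τ : Pm n | τ ∈ A ∧ isTransposition τ} r)
    (hc : compatibleOrder A r)
    (hm : ∀ x : Pm n, x ∈ l ↔ (x ∈ A ∧ isTransposition x))
    (hs : List.Pairwise r l) : good A l := by
  refine ⟨hnd, fun x hx => (hm x).1 hx, ?_, ?_, ?_⟩
  · intro i j k h1 h2 hik hR hij hjkA
    have hijA : Equiv.swap i j ∈ A := ((hm _).1 hij).1
    have hLnot : Lc i j k ∉ A := by
      rcases forced_dichotomy hA h1 h2 hijA hjkA hik with ⟨-, hL⟩ | ⟨-, hRn⟩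
      · exact hL
      · exact absurd hR hRn
    have hjkm : Equiv.swap j k ∈ l := (hm _).2 ⟨hjkA, j, k, h2, rfl⟩
    exact ⟨hjkm, before_of_rel hnd hst hm hs hij hjkm (sw_ne_left h1 h2)
      (hc.1 i j k h1 h2 hR hLnot)⟩
  · intro i j k h1 h2 hik hL hjk hijA
    have hjkA : Equiv.swap j k ∈ A := ((hm _).1 hjk).1
    have hRnot : Rc i j k ∉ A := by
      rcases forced_dichotomy hA h1 h2 hijA hjkA hik with ⟨-, hLn⟩ | ⟨-, hRn⟩
      · exact absurd hL hLn
      · exact hRn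
    have hijm : Equiv.swap i j ∈ l := (hm _).2 ⟨hijA, i, j, h1, rfl⟩
    exact ⟨hijm, before_of_rel hnd hst hm hs hjk hijm (sw_ne_left h1 h2).symm
      (hc.2.1 i j k h1 h2 hL hRnot)⟩
  · intro i j k h1 h2 hikA
    have hikm : Equiv.swap i k ∈ l := (hm _).2 ⟨hikA, i, k, h1.trans h2, rfl⟩
    have hijA : Equiv.swap i j ∈ A := clos_swap hA (le_refl i) h1 (le_of_lt h2) hikA
    have hjkA : Equiv.swap j k ∈ A := clos_swap hA (le_of_lt h1) h2 (le_refl k) hikA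
    have hijm : Equiv.swap i j ∈ l := (hm _).2 ⟨hijA, i, j, h1, rfl⟩
    have hjkm : Equiv.swap j k ∈ l := (hm _).2 ⟨hjkA, j, k, h2, rfl⟩
    refine ⟨fun h _ _ => absurd hikm h, fun _ h _ => absurd hijm h, ?_,
      fun _ _ h => absurd hjkm h, fun _ _ h => absurd hijm h⟩
    intro _ _ _
    rcases hc.2.2 i j k h1 h2 hikA with ⟨r1, r2⟩ | ⟨r1, r2⟩
    · exact Or.inl ⟨before_of_rel hnd hst hm hs hijm hikm (sw_ne_mid_l h1 h2) r1,
        before_of_rel hnd hst hm hs hikm hjkm (sw_ne_mid_r h1 h2).symm r2⟩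
    · exact Or.inr ⟨before_of_rel hnd hst hm hs hjkm hikm (sw_ne_mid_r h1 h2) r1,
        before_of_rel hnd hst hm hs hikm hijm (sw_ne_mid_l h1 h2).symm r2⟩

theorem prod_compatible_order_unique' (A : Set (Equiv.Perm (Fin n)))
    (hA : admissible A)
    (r r' : Equiv.Perm (Fin n) → Equiv.Perm (Fin n) → Prop)
    (hst : strictTotalOn {τ : Pm n | τ ∈ A ∧ isTransposition τ} r)
    (hst' : strictTotalOn {τ : Pm n | τ ∈ A ∧ isTransposition τ} r')
    (hc : compatibleOrder A r) (hc' : compatibleOrder A r')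
    (l1 l2 : List (Equiv.Perm (Fin n)))
    (hnd1 : l1.Nodup) (hnd2 : l2.Nodup)
    (hm1 : ∀ x, x ∈ l1 ↔ (x ∈ A ∧ isTransposition x))
    (hm2 : ∀ x, x ∈ l2 ↔ (x ∈ A ∧ isTransposition x))
    (hs1 : l1.Pairwise r) (hs2 : l2.Pairwise r') :
    l1.prod = l2.prod := by
  have g1 : good A l1 := good_of_sorted hA hnd1 hst hc hm1 hs1
  have g2 : good A l2 := good_of_sorted hA hnd2 hst' hc' hm2 hs2
  exact prods_eq hA l1.length l1 l2 (le_refl _) g1 g2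
    (fun z => (hm1 z).trans (hm2 z).symm)

end Top


/-- the product of the transpositions of A in any compatible order
is independent of the choice of compatible order. -/
theorem prod_compatible_order_unique (n : ℕ) (A : Set (Equiv.Perm (Fin n)))
    (hA : admissible A)
    (r r' : Equiv.Perm (Fin n) → Equiv.Perm (Fin n) → Prop)
    (hst : strictTotalOn {τ | τ ∈ A ∧ isTransposition τ} r)
    (hst' : strictTotalOn {τ | τ ∈ A ∧ isTransposition τ} r')
    (hc : compatibleOrder A r) (hc' : compatibleOrder A r')
    (l1 l2 : List (Equiv.Perm (Fin n)))
    (hnd1 : l1.Nodup) (hnd2 : l2.Nodup)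
    (hm1 : ∀ x, x ∈ l1 ↔ (x ∈ A ∧ isTransposition x))
    (hm2 : ∀ x, x ∈ l2 ↔ (x ∈ A ∧ isTransposition x))
    (hs1 : l1.Pairwise r) (hs2 : l2.Pairwise r') :
    l1.prod = l2.prod :=
  prod_compatible_order_unique' A hA r r' hst hst' hc hc' l1 l2 hnd1 hnd2 hm1 hm2 hs1 hs2

end SmoothPerm
end

section
/- A permutation σ ∈ S_n is defined by inclusions (i.e., τ ≤ σ whenever max τ([i]) ≤ max σ([i]) and max τ^{-1}([i]) ≤ max σ^{-1}([i]) for all i) if and only if for every τ ∈ S_n, τ ≤ σ holds precisely when every cyclic-shift permutation R_{[i,j]} or L_{[i,j]} that is ≤ τ is also ≤ σ. -/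
/-!
For `i < j`, comparing rank counts shows that `R_{[i,j]} ≤ τ` iff `τ⁻¹` sends some point of
`[0, i]` to `[j, n)`, i.e. iff `j ≤ m_{τ⁻¹}(i)`: the only rectangles `[0, a] × [0, b]` in which
`R_{[i,j]}` has fewer than `min(a, b) + 1` points are those with `i ≤ b ≤ a < j`, where it has
exactly `b`. Dually `L_{[i,j]} ≤ τ` iff `j ≤ m_τ(i)`. Since `i ≤ m_σ(i)` always, these threshold
conditions for all `i < j` amount to `m_τ ≤ m_σ` and `m_{τ⁻¹} ≤ m_{σ⁻¹}`, and `τ ≤ σ` implies them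
by transitivity; so both sides of the equivalence say that these inequalities force `τ ≤ σ`.
-/

namespace SmoothPerm

variable {n : ℕ}

open Equiv Finset

section Rseg

variable {i j x : Fin n}

def segment (i j : Fin n) : List (Fin n) :=
  List.ofFn fun k : Fin (j - i + 1) => (⟨i + k, by omega⟩ : Fin n)

lemma length_segment (i j : Fin n) : (segment i j).length = j - i + 1 := by
  simp [segment]

lemma getElem_segment (i j : Fin n) (k : ℕ) (hk : k < (segment i j).length) :
    ((segment i j)[k] : ℕ) = i + k := by
  simp only [segment, List.getElem_ofFn]

lemma segment_pairwise_lt (i j : Fin n) : (segment i j).Pairwise (· < ·) := by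
  simp only [segment, List.pairwise_ofFn, Fin.lt_def]
  omega

lemma Rseg_eq_formPerm_segment (hij : i ≤ j) : Rseg i j = (segment i j).formPerm := by
  rw [Rseg]
  congr 1
  refine ((List.pairwise_lt_finRange n).sublist List.filter_sublist).eq_of_mem_iff
    (segment_pairwise_lt i j) fun x => ?_
  simp only [segment, List.mem_filter, List.mem_finRange, List.mem_ofFn, true_and,
    decide_eq_true_eq, Fin.le_def, Fin.ext_iff]
  constructor
  · rintro ⟨h1, h2⟩
    exact ⟨⟨x - i, by omega⟩, by simp; omega⟩
  · rintro ⟨k, hk⟩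
    omega

lemma Rseg_apply_of_not_mem (h : ¬ (i ≤ x ∧ x ≤ j)) : Rseg i j x = x :=
  List.formPerm_apply_of_notMem (by simpa using h)

lemma Rseg_apply_of_mem (hi : i ≤ x) (hj : x ≤ j) :
    (Rseg i j x : ℕ) = if x = j then (i : ℕ) else x + 1 := by
  rw [Fin.le_def] at hi hj
  have hk : (x : ℕ) - i < (segment i j).length := by rw [length_segment]; omega
  have hx : (segment i j)[(x : ℕ) - i] = x := by ext; rw [getElem_segment]; omega
  conv_lhs => rw [Rseg_eq_formPerm_segment (by omega), ← hx]
  rw [List.formPerm_apply_getElem _ ((segment_pairwise_lt i j).imp ne_of_lt), getElem_segment,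
    length_segment]
  split_ifs with h
  · subst h; simp
  · rw [Nat.mod_eq_of_lt (by omega : (x : ℕ) - i + 1 < j - i + 1)]
    omega

lemma Rseg_apply_right (hij : i ≤ j) : Rseg i j j = i := by
  ext; simp [Rseg_apply_of_mem hij le_rfl]

lemma Rseg_apply_le_succ (x : Fin n) : (Rseg i j x : ℕ) ≤ x + 1 := by
  by_cases hx : i ≤ x ∧ x ≤ j
  · rw [Rseg_apply_of_mem hx.1 hx.2]
    split_ifs with h
    · subst h; rw [Fin.le_def] at hx; omega
    · rfl
  · rw [Rseg_apply_of_not_mem hx]; omega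

lemma le_Rseg_apply_of_ne (hx : x ≠ j) : x ≤ Rseg i j x := by
  by_cases hm : i ≤ x ∧ x ≤ j
  · rw [Fin.le_def, Rseg_apply_of_mem hm.1 hm.2, if_neg hx]; omega
  · rw [Rseg_apply_of_not_mem hm]

lemma Rseg_inv_apply_left (hij : i ≤ j) : (Rseg i j)⁻¹ i = j := by
  rw [Perm.inv_eq_iff_eq, Rseg_apply_right hij]

lemma Rseg_inv_apply_le (hij : i ≤ j) {y : Fin n} (hy : y ≠ i) : (Rseg i j)⁻¹ y ≤ y := by
  obtain ⟨x, rfl⟩ := (Rseg i j).surjective y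
  rw [Perm.coe_inv, symm_apply_apply]
  refine le_Rseg_apply_of_ne fun hx => hy ?_
  rw [hx, Rseg_apply_right hij]

end Rseg

section rankCount

variable {σ τ ρ : Perm (Fin n)} {a b : Fin n}

def rankCount (σ : Perm (Fin n)) (a b : Fin n) : ℕ :=
  (Finset.univ.filter (fun x => x ≤ a ∧ σ x ≤ b)).card

lemma bruhatLE_iff_rankCount_le :
    bruhatLE τ σ ↔ ∀ a b, rankCount σ a b ≤ rankCount τ a b :=
  Iff.rfl

lemma bruhatLE.trans (h₁ : bruhatLE ρ τ) (h₂ : bruhatLE τ σ) : bruhatLE ρ σ :=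
  fun a b => (h₂ a b).trans (h₁ a b)

lemma rankCount_inv (σ : Perm (Fin n)) (a b : Fin n) : rankCount σ⁻¹ b a = rankCount σ a b :=
  card_equiv σ⁻¹ fun y => by simp [and_comm]

lemma bruhatLE_inv_inv : bruhatLE τ⁻¹ σ⁻¹ ↔ bruhatLE τ σ := by
  simp only [bruhatLE_iff_rankCount_le, rankCount_inv]
  exact forall_comm

lemma rankCount_le_succ (σ : Perm (Fin n)) (a b : Fin n) : rankCount σ a b ≤ a + 1 := by
  rw [← Fin.card_Iic]
  exact card_le_card fun x hx => by simp_all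

lemma succ_le_rankCount (h : ∀ x ≤ a, σ x ≤ b) : a + 1 ≤ rankCount σ a b := by
  rw [← Fin.card_Iic]
  exact card_le_card fun x hx => by simp_all

lemma rankCount_le_of_lt_apply {x : Fin n} (hx : x ≤ a) (h : b < σ x) :
    rankCount σ a b ≤ a := by
  have hsub : univ.filter (fun y => y ≤ a ∧ σ y ≤ b) ⊆ (Iic a).erase x := fun y hy => by
    simp only [mem_filter, mem_univ, true_and] at hy
    exact mem_erase.2 ⟨by rintro rfl; exact h.not_ge hy.2, mem_Iic.2 hy.1⟩
  simpa [rankCount, card_erase_of_mem (mem_Iic.2 hx)] using card_le_card hsub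

lemma le_rankCount_of_forall_ne {x₀ : Fin n} (h : ∀ x ≤ a, x ≠ x₀ → σ x ≤ b) :
    (a : ℕ) ≤ rankCount σ a b := by
  have hsub : (Iic a).erase x₀ ⊆ univ.filter (fun y => y ≤ a ∧ σ y ≤ b) := fun y hy => by
    obtain ⟨hy₀, hya⟩ := mem_erase.1 hy
    simpa using ⟨mem_Iic.1 hya, h y (mem_Iic.1 hya) hy₀⟩
  calc (a : ℕ) = #(Iic a) - 1 := by simp
    _ ≤ #((Iic a).erase x₀) := pred_card_le_card_erase
    _ ≤ rankCount σ a b := card_le_card hsub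

end rankCount

section maxS

variable {σ τ : Perm (Fin n)} {i j : Fin n}

lemma le_maxS_iff : j ≤ maxS σ i ↔ ∃ x ≤ i, j ≤ σ x := by
  rw [← not_lt, maxS, max'_lt_iff (H := ⟨σ i, mem_image_of_mem _ (by simp)⟩)]
  simp

lemma self_le_maxS (σ : Perm (Fin n)) (i : Fin n) : i ≤ maxS σ i := by
  refine le_maxS_iff.2 (by_contra fun h => ?_)
  push Not at h
  have := card_le_card_of_injOn σ (s := Iic i) (t := Iio i)
    (fun x hx => by simpa using h x (by simpa using hx)) σ.injective.injOn
  simp at this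

lemma maxS_le_maxS_iff :
    (∀ x, maxS τ x ≤ maxS σ x) ↔ ∀ i j, i < j → j ≤ maxS τ i → j ≤ maxS σ i := by
  refine ⟨fun h i j _ hj => hj.trans (h i), fun h x => ?_⟩
  rcases le_or_gt (maxS τ x) x with hle | hlt
  · exact hle.trans (self_le_maxS σ x)
  · exact h x _ hlt le_rfl

end maxS

section cyclicShift

variable {i j : Fin n}

lemma bruhatLE_Rseg_iff (hij : i < j) (τ : Perm (Fin n)) :
    bruhatLE (Rseg i j) τ ↔ j ≤ maxS τ⁻¹ i := by
  have hij' : (i : ℕ) < j := hij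
  rw [le_maxS_iff]
  constructor
  · intro h
    by_contra! hτ
    -- In the rectangle `[0, j - 1] × [0, i]` the shift `R_{[i,j]}` has only `i` points.
    let a : Fin n := ⟨j - 1, by omega⟩
    have hlt : ∀ y : Fin n, y < j ↔ y ≤ a := fun y => by
      simp only [Fin.lt_def, Fin.le_def, a]; omega
    have hτ' : i + 1 ≤ rankCount τ⁻¹ i a :=
      succ_le_rankCount fun y hy => (hlt _).1 (hτ y hy)
    have hR : rankCount (Rseg i j)⁻¹ i a ≤ i := rankCount_le_of_lt_apply le_rfl <| by
      rw [Rseg_inv_apply_left hij.le, ← not_le, ← hlt]; exact lt_irrefl j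
    have := bruhatLE_iff_rankCount_le.1 h a i
    rw [← rankCount_inv τ, ← rankCount_inv (Rseg i j)] at this
    omega
  · rintro ⟨y₀, hy₀i, hy₀j⟩
    refine bruhatLE_iff_rankCount_le.2 fun a b => ?_
    rcases lt_or_ge a b with hab | hba
    · calc rankCount τ a b ≤ a + 1 := rankCount_le_succ τ a b
        _ ≤ rankCount (Rseg i j) a b := succ_le_rankCount fun x hx => by
          have := Rseg_apply_le_succ (i := i) (j := j) x
          rw [Fin.le_def] at hx ⊢; rw [Fin.lt_def] at hab; omega
    · rw [← rankCount_inv τ, ← rankCount_inv (Rseg i j)]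
      by_cases hdrop : i ≤ b ∧ a < j
      · calc rankCount τ⁻¹ b a ≤ b :=
              rankCount_le_of_lt_apply (hy₀i.trans hdrop.1) (hdrop.2.trans_le hy₀j)
          _ ≤ rankCount (Rseg i j)⁻¹ b a := le_rankCount_of_forall_ne (x₀ := i)
              fun y hy hyi => (Rseg_inv_apply_le hij.le hyi).trans (hy.trans hba)
      · calc rankCount τ⁻¹ b a ≤ b + 1 := rankCount_le_succ τ⁻¹ b a
          _ ≤ rankCount (Rseg i j)⁻¹ b a := succ_le_rankCount fun y hy => by
            rcases eq_or_ne y i with rfl | hyi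
            · rw [Rseg_inv_apply_left hij.le]
              exact not_lt.1 fun h => hdrop ⟨hy, h⟩
            · exact (Rseg_inv_apply_le hij.le hyi).trans (hy.trans hba)

lemma bruhatLE_Rseg_inv_iff (hij : i < j) (τ : Perm (Fin n)) :
    bruhatLE (Rseg i j)⁻¹ τ ↔ j ≤ maxS τ i := by
  rw [← bruhatLE_inv_inv, inv_inv, bruhatLE_Rseg_iff hij, inv_inv]

lemma forall_Rseg_le_imp_iff_maxS_le (τ σ : Perm (Fin n)) :
    (∀ i j : Fin n, i < j →
      ((bruhatLE (Rseg i j) τ → bruhatLE (Rseg i j) σ) ∧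
       (bruhatLE (Rseg i j)⁻¹ τ → bruhatLE (Rseg i j)⁻¹ σ))) ↔
    (∀ x, maxS τ x ≤ maxS σ x) ∧ (∀ x, maxS τ⁻¹ x ≤ maxS σ⁻¹ x) := by
  rw [maxS_le_maxS_iff, maxS_le_maxS_iff, and_comm]
  simp only [← imp_and, ← forall_and]
  refine forall₃_congr fun i j hij => ?_
  rw [bruhatLE_Rseg_iff hij, bruhatLE_Rseg_iff hij, bruhatLE_Rseg_inv_iff hij,
    bruhatLE_Rseg_inv_iff hij]

end cyclicShift

theorem definedByInclusions_iff_cyclic (n : ℕ) (σ : Equiv.Perm (Fin n)) :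
    definedByInclusions σ ↔
      ∀ τ : Equiv.Perm (Fin n),
        (bruhatLE τ σ ↔ ∀ i j : Fin n, i < j →
          ((bruhatLE (Rseg i j) τ → bruhatLE (Rseg i j) σ) ∧
           (bruhatLE (Rseg i j)⁻¹ τ → bruhatLE (Rseg i j)⁻¹ σ))) := by
  simp only [forall_Rseg_le_imp_iff_maxS_le]
  refine ⟨fun h τ => ⟨fun hτσ => ?_, fun hτ => h τ hτ.1 hτ.2⟩,
    fun h τ hτ₁ hτ₂ => (h τ).2 ⟨hτ₁, hτ₂⟩⟩
  rw [← forall_Rseg_le_imp_iff_maxS_le]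
  exact fun i j _ => ⟨fun hR => hR.trans hτσ, fun hL => hL.trans hτσ⟩

end SmoothPerm
end
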